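/- arXiv:1909.11068 — 8 statements merged into one kernel-verified Lean document; each statement's English description precedes it below -/
import Mathlib

section
/- For every positive integer m and every natural number t, there exist natural numbers x_1, ..., x_t such that the sum of their squares is at most m and m - (x_1^2 + ... + x_t^2) <= 4 * m^(1/2^t), where the exponentiation is real-number exponentiation. (In particular, greedily subtracting the largest square not exceeding the remainder shrinks the remainder doubly exponentially.) -/
lemma greedy_square_aux (m : ℕ) (hm : 0 < m) (t : ℕ) :
    ∃ x : Fin t → ℕ,
      (∑ i, (x i) ^ 2) ≤ m ∧
      ((m - ∑ i, (x i) ^ 2 : ℕ) : ℝ) ≤ 4 * (m : ℝ) ^ ((1 : ℝ) / 2 ^ t) := by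
  induction t with
  | zero =>
    refine ⟨0, by simp, ?_⟩
    simp only [Finset.univ_eq_empty, Finset.sum_empty, Nat.sub_zero, pow_zero, div_one,
      Real.rpow_one]
    have : (1 : ℝ) ≤ (m : ℝ) := by exact_mod_cast hm
    linarith
  | succ t ih =>
    obtain ⟨x, hx, hb⟩ := ih
    set s := ∑ i, x i ^ 2 with hs
    set r := m - s with hr
    set y := Nat.sqrt r with hy
    have hy2 : y ^ 2 ≤ r := Nat.sqrt_le' r
    have hsq : Nat.succ y ^ 2 = y ^ 2 + 2 * y + 1 := by rw [Nat.succ_eq_add_one]; ring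
    have hlt : r < Nat.succ y ^ 2 := Nat.lt_succ_sqrt' r
    refine ⟨Fin.snoc x y, ?_, ?_⟩
    · rw [Fin.sum_univ_castSucc]
      simp only [Fin.snoc_castSucc, Fin.snoc_last]
      omega
    · rw [Fin.sum_univ_castSucc]
      simp only [Fin.snoc_castSucc, Fin.snoc_last, ← hs]
      have key : m - (s + y ^ 2) ≤ 2 * y := by omega
      have h1 : ((m - (s + y ^ 2) : ℕ) : ℝ) ≤ 2 * (y : ℝ) := by exact_mod_cast key
      have hrm : (r : ℝ) ≤ 4 * (m : ℝ) ^ ((1 : ℝ) / 2 ^ t) := hb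
      have hyr : (y : ℝ) ≤ Real.sqrt r := by
        rw [show (y : ℝ) = Real.sqrt ((y : ℝ) ^ 2) from (Real.sqrt_sq (by positivity)).symm]
        apply Real.sqrt_le_sqrt
        exact_mod_cast hy2
      have hsr : Real.sqrt r ≤ Real.sqrt (4 * (m : ℝ) ^ ((1 : ℝ) / 2 ^ t)) :=
        Real.sqrt_le_sqrt hrm
      have h4 : Real.sqrt (4 * (m : ℝ) ^ ((1 : ℝ) / 2 ^ t))
          = 2 * ((m : ℝ) ^ ((1 : ℝ) / 2 ^ t)) ^ ((1 : ℝ) / 2) := by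
        rw [Real.sqrt_mul (by norm_num : (0 : ℝ) ≤ 4),
          show (4 : ℝ) = 2 ^ 2 by norm_num, Real.sqrt_sq (by norm_num : (0 : ℝ) ≤ 2),
          Real.sqrt_eq_rpow]
      have h5 : ((m : ℝ) ^ ((1 : ℝ) / 2 ^ t)) ^ ((1 : ℝ) / 2)
          = (m : ℝ) ^ ((1 : ℝ) / 2 ^ (t + 1)) := by
        rw [← Real.rpow_mul (by positivity)]
        congr 1
        rw [pow_succ]
        field_simp
      calc ((m - (s + y ^ 2) : ℕ) : ℝ) ≤ 2 * (y : ℝ) := h1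
        _ ≤ 2 * Real.sqrt r := by linarith
        _ ≤ 2 * Real.sqrt (4 * (m : ℝ) ^ ((1 : ℝ) / 2 ^ t)) := by linarith
        _ = 4 * (m : ℝ) ^ ((1 : ℝ) / 2 ^ (t + 1)) := by rw [h4, h5]; ring

/-- For every positive integer `m` and every natural number `t`, there exist naturals
`x 0, ..., x (t-1)` whose squares sum to at most `m`, with
`m - (x 0 ^ 2 + ⋯ + x (t-1) ^ 2) ≤ 4 * m ^ (1 / 2 ^ t)` (real exponentiation). -/
theorem greedy_square_decomposition (m : ℕ) (hm : 0 < m) (t : ℕ) :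
    ∃ x : Fin t → ℕ,
      (∑ i, (x i) ^ 2) ≤ m ∧
      (m : ℝ) - (∑ i, ((x i : ℝ)) ^ 2) ≤ 4 * (m : ℝ) ^ ((1 : ℝ) / 2 ^ t) := by
  obtain ⟨x, hx, hb⟩ := greedy_square_aux m hm t
  refine ⟨x, hx, ?_⟩
  have : ((m - ∑ i, (x i) ^ 2 : ℕ) : ℝ) = (m : ℝ) - ∑ i, ((x i : ℝ)) ^ 2 := by
    rw [Nat.cast_sub hx]
    push_cast
    ring
  linarith [this ▸ hb]
end

section
/- Let n >= 1 be a natural number, let r >= 0 and M be real numbers, and let C be a nonnegative real-valued cost function on pairs (x, y) where x ranges over the disjoint union (Fin n) ⊕ (Fin (n-1)) (with left summands called 'real rows' and right summands called 'v-rows') and y ranges over (Fin n) ⊕ (Fin (n-1)) (with left summands called 'real columns' and right summands called 'u-columns'). Suppose: (i) C(real row i, u-column) = r for every i and every u-column; (ii) C(v-row, real column j) = r for every v-row and every j; (iii) C(real row i, real column j) >= M for all i, j; (iv) C(v-row, u-column) >= M for every v-row and u-column; and (v) 2*(n-1)*r + min_{i,j} C(real row i, real column j) < 2*M. Then the minimum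 over all bijections sigma from (Fin n) ⊕ (Fin (n-1)) to itself of the total cost sum_x C(x, sigma(x)) equals 2*(n-1)*r + min_{i,j} C(real row i, real column j). -/
/-- The "swap" equivalence on `Option α ⊕ α` used to build the witness permutation:
`inl none ↦ inl none`, `inl (some a) ↦ inr a`, `inr a ↦ inl (some a)`. -/
def midSwap (α : Type*) : Option α ⊕ α ≃ Option α ⊕ α where
  toFun x := match x with
    | .inl none => .inl none
    | .inl (some a) => .inr a
    | .inr a => .inl (some a)
  invFun x := match x with
    | .inl none => .inl none
    | .inl (some a) => .inr a
    | .inr a => .inl (some a)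
  left_inv := by rintro ((_ | a) | a) <;> rfl
  right_inv := by rintro ((_ | a) | a) <;> rfl

/-- Abstract assignment lemma underlying the closest-pair-to-EMD reduction.
Rows and columns are `Fin n ⊕ Fin (n-1)`: left summands are the "real" rows/columns,
right summands are the `v`-rows / `u`-columns.  If real-to-`u` and `v`-to-real costs
are all exactly `r`, real-to-real and `v`-to-`u` costs are all at least `M`, and
`2(n-1)r + min_{i,j} C(i,j) < 2M`, then the minimum-cost bijection has total cost
`2(n-1)r + min_{i,j} C(i,j)`. -/
theorem min_assignment_one_cross_edge (n : ℕ) (hn : 1 ≤ n) (r M : ℝ) (hr : 0 ≤ r)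
    (C : (Fin n ⊕ Fin (n - 1)) → (Fin n ⊕ Fin (n - 1)) → ℝ)
    (hC : ∀ x y, 0 ≤ C x y)
    (hu : ∀ (i : Fin n) (u : Fin (n - 1)), C (Sum.inl i) (Sum.inr u) = r)
    (hv : ∀ (v : Fin (n - 1)) (j : Fin n), C (Sum.inr v) (Sum.inl j) = r)
    (hreal : ∀ (i j : Fin n), M ≤ C (Sum.inl i) (Sum.inl j))
    (hvu : ∀ (v u : Fin (n - 1)), M ≤ C (Sum.inr v) (Sum.inr u))
    (hlt : 2 * ((n : ℝ) - 1) * r + (⨅ i : Fin n, ⨅ j : Fin n, C (Sum.inl i) (Sum.inl j))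
        < 2 * M) :
    (⨅ σ : Equiv.Perm (Fin n ⊕ Fin (n - 1)), ∑ x, C x (σ x)) =
      2 * ((n : ℝ) - 1) * r + ⨅ i : Fin n, ⨅ j : Fin n, C (Sum.inl i) (Sum.inl j) := by
  haveI : Nonempty (Fin n) := ⟨⟨0, hn⟩⟩
  set m : ℝ := ⨅ i : Fin n, ⨅ j : Fin n, C (Sum.inl i) (Sum.inl j) with hm_def
  -- basic facts about m
  have hmle : ∀ i j : Fin n, m ≤ C (Sum.inl i) (Sum.inl j) := fun i j =>
    (ciInf_le (Finite.bddBelow_range _) i).trans (ciInf_le (Finite.bddBelow_range _) j)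
  have hMm : M ≤ m := le_ciInf fun i => le_ciInf fun j => hreal i j
  have hm0 : 0 ≤ m := le_ciInf fun i => le_ciInf fun j => hC _ _
  -- argmin of the real-real costs
  obtain ⟨p, -, hp⟩ := Finset.exists_min_image (Finset.univ ×ˢ Finset.univ)
    (fun p : Fin n × Fin n => C (Sum.inl p.1) (Sum.inl p.2))
    ⟨(Classical.arbitrary _, Classical.arbitrary _), by simp⟩
  obtain ⟨i₀, j₀⟩ := p
  have hpm : C (Sum.inl i₀) (Sum.inl j₀) = m := by
    refine le_antisymm ?_ (hmle _ _)
    exact le_ciInf fun i => le_ciInf fun j => hp (i, j) (by simp)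
  -- lower bound for every permutation
  have key : ∀ σ : Equiv.Perm (Fin n ⊕ Fin (n - 1)),
      2 * ((n : ℝ) - 1) * r + m ≤ ∑ x, C x (σ x) := by
    intro σ
    classical
    set ind : (Fin n ⊕ Fin (n - 1)) → ℕ := fun y => if y.isLeft then 1 else 0 with hind
    have hsum : (∑ i : Fin n, ind (σ (Sum.inl i))) + (∑ v : Fin (n - 1), ind (σ (Sum.inr v)))
        = n := by
      have h1 : ∑ x, ind (σ x) = ∑ x, ind x := Equiv.sum_comp σ ind
      rw [Fintype.sum_sum_type, Fintype.sum_sum_type] at h1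
      simpa [ind] using h1
    set a := ∑ i : Fin n, ind (σ (Sum.inl i)) with ha_def
    set b := ∑ v : Fin (n - 1), ind (σ (Sum.inr v)) with hb_def
    have hb : b ≤ n - 1 := by
      calc b ≤ (Finset.univ : Finset (Fin (n - 1))).card • 1 :=
            Finset.sum_le_card_nsmul _ _ 1 (fun x _ => by
              simp only [ind]; split <;> omega)
        _ = n - 1 := by simp
    have ha1 : 1 ≤ a := by omega
    have han : a ≤ n := by omega
    -- bound the left-rows sum
    have h₁ : ∑ i : Fin n, ((ind (σ (Sum.inl i)) : ℝ) * (m - r) + r)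
        ≤ ∑ i : Fin n, C (Sum.inl i) (σ (Sum.inl i)) := by
      refine Finset.sum_le_sum fun i _ => ?_
      rcases hy : σ (Sum.inl i) with j | u
      · simp only [ind, hy, Sum.isLeft_inl, if_pos]
        push_cast
        linarith [hmle i j]
      · simp only [ind, hy, Sum.isLeft_inr, if_neg]
        rw [hu i u]
        norm_num
    have h₂ : ∑ v : Fin (n - 1), ((ind (σ (Sum.inr v)) : ℝ) * (r - M) + M)
        ≤ ∑ v : Fin (n - 1), C (Sum.inr v) (σ (Sum.inr v)) := by
      refine Finset.sum_le_sum fun v _ => ?_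
      rcases hy : σ (Sum.inr v) with j | u
      · simp only [ind, hy, Sum.isLeft_inl, if_pos]
        rw [hv v j]
        norm_num
      · simp only [ind, hy, Sum.isLeft_inr, if_neg]
        push_cast
        linarith [hvu v u]
    have e₁ : ∑ i : Fin n, ((ind (σ (Sum.inl i)) : ℝ) * (m - r) + r)
        = (a : ℝ) * (m - r) + (n : ℝ) * r := by
      rw [Finset.sum_add_distrib, ← Finset.sum_mul, Finset.sum_const]
      push_cast [ha_def]
      simp [mul_comm]
    have e₂ : ∑ v : Fin (n - 1), ((ind (σ (Sum.inr v)) : ℝ) * (r - M) + M)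
        = (b : ℝ) * (r - M) + ((n : ℝ) - 1) * M := by
      have hbcast : (b : ℝ) = ∑ v : Fin (n - 1), (ind (σ (Sum.inr v)) : ℝ) := by
        rw [hb_def]; push_cast; rfl
      rw [Finset.sum_add_distrib, ← Finset.sum_mul, ← hbcast, Finset.sum_const,
        Finset.card_univ, Fintype.card_fin, nsmul_eq_mul, Nat.cast_sub hn]
      push_cast
      ring
    rw [Fintype.sum_sum_type]
    rw [e₁] at h₁; rw [e₂] at h₂
    have hab : (a : ℝ) + (b : ℝ) = n := by exact_mod_cast congrArg Nat.cast hsum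
    have ha1' : (1 : ℝ) ≤ a := by exact_mod_cast ha1
    have han' : (a : ℝ) ≤ n := by exact_mod_cast han
    rcases eq_or_lt_of_le ha1 with heq | hgt
    · -- a = 1
      have : (a : ℝ) = 1 := by exact_mod_cast heq.symm
      rw [this] at h₁
      have hb' : (b : ℝ) = (n : ℝ) - 1 := by rw [← hab, this]; ring
      rw [hb'] at h₂
      linarith
    · -- 2 ≤ a, so n ≥ 2
      have hn2 : 2 ≤ n := le_trans hgt han
      have hn2' : (2 : ℝ) ≤ n := by exact_mod_cast hn2
      have h2r : 2 * r < M := by nlinarith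
      have hfac : 0 ≤ ((a : ℝ) - 1) * (m + M - 2 * r) := by
        apply mul_nonneg <;> linarith
      have hb' : (b : ℝ) = (n : ℝ) - (a : ℝ) := by linarith
      rw [hb'] at h₂
      nlinarith [h₁, h₂]
  -- witness permutation
  have hk : n - 1 + 1 = n := by omega
  let e : Fin n ≃ Option (Fin (n - 1)) :=
    (finCongr hk.symm).trans (finSuccEquiv' (Fin.cast hk.symm i₀))
  let f : Fin n ≃ Option (Fin (n - 1)) :=
    (finCongr hk.symm).trans (finSuccEquiv' (Fin.cast hk.symm j₀))
  have he : e i₀ = none := by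
    simp [e, finSuccEquiv'_at]
  have hf : f j₀ = none := by
    simp [f, finSuccEquiv'_at]
  let σ₀ : Equiv.Perm (Fin n ⊕ Fin (n - 1)) :=
    (Equiv.sumCongr e (Equiv.refl (Fin (n - 1)))).trans
      ((midSwap (Fin (n - 1))).trans (Equiv.sumCongr f.symm (Equiv.refl (Fin (n - 1)))))
  have hσ₀_i₀ : σ₀ (Sum.inl i₀) = Sum.inl j₀ := by
    have : f.symm none = j₀ := f.symm_apply_eq.mpr hf.symm
    simp [σ₀, he, midSwap, this]
  have hσ₀_other : ∀ i : Fin n, i ≠ i₀ → ∃ u : Fin (n - 1), σ₀ (Sum.inl i) = Sum.inr u := by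
    intro i hi
    rcases hei : e i with _ | u
    · exact absurd (e.injective (hei.trans he.symm)) hi
    · exact ⟨u, by simp [σ₀, hei, midSwap]⟩
  have hσ₀_inr : ∀ v : Fin (n - 1), σ₀ (Sum.inr v) = Sum.inl (f.symm (some v)) := by
    intro v
    simp [σ₀, midSwap]
  have hcost : ∑ x, C x (σ₀ x) = 2 * ((n : ℝ) - 1) * r + m := by
    rw [Fintype.sum_sum_type]
    have hL : ∑ i : Fin n, C (Sum.inl i) (σ₀ (Sum.inl i)) = m + ((n : ℝ) - 1) * r := by
      rw [← Finset.add_sum_erase Finset.univ _ (Finset.mem_univ i₀)]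
      have h1 : ∑ i ∈ Finset.univ.erase i₀, C (Sum.inl i) (σ₀ (Sum.inl i))
          = ∑ i ∈ Finset.univ.erase i₀, r := by
        refine Finset.sum_congr rfl fun i hi => ?_
        obtain ⟨u, hu'⟩ := hσ₀_other i (Finset.ne_of_mem_erase hi)
        rw [hu', hu]
      rw [h1, hσ₀_i₀, hpm, Finset.sum_const, Finset.card_erase_of_mem (Finset.mem_univ i₀)]
      simp [Nat.cast_sub hn, nsmul_eq_mul]
    have hR : ∑ v : Fin (n - 1), C (Sum.inr v) (σ₀ (Sum.inr v)) = ((n : ℝ) - 1) * r := by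
      have h1 : ∀ v : Fin (n - 1), C (Sum.inr v) (σ₀ (Sum.inr v)) = r := fun v => by
        rw [hσ₀_inr v, hv]
      rw [Finset.sum_congr rfl fun v _ => h1 v, Finset.sum_const]
      simp [Nat.cast_sub hn, nsmul_eq_mul]
    rw [hL, hR]; ring
  refine le_antisymm ?_ (le_ciInf key)
  calc (⨅ σ : Equiv.Perm (Fin n ⊕ Fin (n - 1)), ∑ x, C x (σ x))
      ≤ ∑ x, C x (σ₀ x) := ciInf_le (Finite.bddBelow_range _) σ₀
    _ = 2 * ((n : ℝ) - 1) * r + m := hcost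
end

section
/- Let n >= 2, k >= 1, c >= 1 and 1 <= d <= n be natural numbers, and set N = n^(16k). Let a, b : Fin n -> Z^d be families of integer vectors all of whose entries lie in {1, ..., n^k}, such that the squared Euclidean norm ||a_i||^2 is odd for every i and ||b_j||^2 is odd for every j. Suppose adjA : Fin n -> Z^(c+1) and adjB : Fin n -> Z^(c+1) satisfy: (adjA i)_0 = (||a_i||^2 + 1)/2 and ||adjA i||^2 = n^(4k) * d^2 for every i, and (adjB j)_0 = (||b_j||^2 + 1)/2 and ||adjB j||^2 = n^(4k) * d^2 for every j. In R^(2d+2c+2), with coordinates grouped into blocks of sizes d, c+1, c+1, d, define: u = (0^d, (1,0^c), 0^(c+1), 0^d); v = (N^d, 0^(c+1), (1,0^c), 0^d); a'_i = (0^d, adjA i, 0^(c+1), a_i); b'_j = (N^d, 0^(c+1), adjB j, b_j). Let P_1, ..., P_{2n-1} be the family consisting of a'_1, ..., a'_n followed by n-1 copies of v, and let Q_1, ..., Q_{2n-1} consist of b'_1, ..., b'_n followed by n-1 copies of u. Then the minimum over all permutations sigma of {1, ..., 2n-1} of sum_i ||P_i - Q_{sigma(i)}||_2 equals 2*(n-1)*n^(2k)*d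 + min_{i,j} sqrt(N^2*d + 2*n^(4k)*d^2 + ||a_i - b_j||_2^2). -/
set_option maxHeartbeats 1000000

namespace EMDReduction

/-- Coordinates of `ℝ^(2d+2c+2)` grouped into blocks of sizes `d`, `c+1`, `c+1`, `d`. -/
abbrev Coord (d c : ℕ) := Fin d ⊕ Fin (c + 1) ⊕ Fin (c + 1) ⊕ Fin d

/-- `u = (0^d, (1,0^c), 0^(c+1), 0^d)`. -/
def u (d c : ℕ) : Coord d c → ℝ :=
  Sum.elim (fun _ => 0)
    (Sum.elim (fun j => if j = 0 then 1 else 0)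
      (Sum.elim (fun _ => 0) (fun _ => 0)))

/-- `v = (N^d, 0^(c+1), (1,0^c), 0^d)`. -/
def v (d c : ℕ) (N : ℝ) : Coord d c → ℝ :=
  Sum.elim (fun _ => N)
    (Sum.elim (fun _ => 0)
      (Sum.elim (fun j => if j = 0 then 1 else 0) (fun _ => 0)))

/-- `a' = (0^d, adj_a, 0^(c+1), a)`. -/
def aPoint (d c : ℕ) (adj : Fin (c + 1) → ℤ) (av : Fin d → ℤ) : Coord d c → ℝ :=
  Sum.elim (fun _ => 0)
    (Sum.elim (fun j => (adj j : ℝ))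
      (Sum.elim (fun _ => 0) (fun t => (av t : ℝ))))

/-- `b' = (N^d, 0^(c+1), adj_b, b)`. -/
def bPoint (d c : ℕ) (N : ℝ) (adj : Fin (c + 1) → ℤ) (bv : Fin d → ℤ) : Coord d c → ℝ :=
  Sum.elim (fun _ => N)
    (Sum.elim (fun _ => 0)
      (Sum.elim (fun j => (adj j : ℝ)) (fun t => (bv t : ℝ))))

/-- The family `P` : the points `a'_1, …, a'_n` together with `n-1` copies of `v`. -/
def P (n d c : ℕ) (N : ℝ) (adjA : Fin n → Fin (c + 1) → ℤ) (a : Fin n → Fin d → ℤ) :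
    Fin n ⊕ Fin (n - 1) → Coord d c → ℝ :=
  Sum.elim (fun i => aPoint d c (adjA i) (a i)) (fun _ => v d c N)

/-- The family `Q` : the points `b'_1, …, b'_n` together with `n-1` copies of `u`. -/
def Q (n d c : ℕ) (N : ℝ) (adjB : Fin n → Fin (c + 1) → ℤ) (b : Fin n → Fin d → ℤ) :
    Fin n ⊕ Fin (n - 1) → Coord d c → ℝ :=
  Sum.elim (fun j => bPoint d c N (adjB j) (b j)) (fun _ => u d c)

/- ### Auxiliary lemmas -/

lemma sum_delta_sq (c : ℕ) (x : Fin (c+1) → ℤ) :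
    ∑ j, ((x j : ℝ) - (if j = (0:Fin (c+1)) then 1 else 0))^2
      = (∑ j, (x j:ℝ)^2) - 2*(x 0:ℝ) + 1 := by
  have h : ∀ j : Fin (c+1), ((x j:ℝ) - (if j = 0 then 1 else 0))^2
      = (x j:ℝ)^2 - (if j = 0 then 2*(x j:ℝ) else 0) + (if j = 0 then 1 else 0) := by
    intro j; split <;> ring
  rw [Finset.sum_congr rfl (fun j _ => h j), Finset.sum_add_distrib, Finset.sum_sub_distrib,
    Finset.sum_ite_eq' Finset.univ (0 : Fin (c+1)) (fun j => 2*(x j:ℝ)),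
    Finset.sum_ite_eq' Finset.univ (0 : Fin (c+1)) (fun _ => (1:ℝ))]
  simp

lemma inside_ab (d c : ℕ) (N : ℝ) (adjA adjB : Fin (c+1) → ℤ) (av bv : Fin d → ℤ) :
    ∑ coord, (aPoint d c adjA av coord - bPoint d c N adjB bv coord)^2
      = N^2*(d:ℝ) + (∑ j, (adjA j:ℝ)^2) + (∑ j, (adjB j:ℝ)^2)
        + ∑ t, ((av t:ℝ)-(bv t:ℝ))^2 := by
  simp [aPoint, bPoint, Fintype.sum_sum_type, Finset.sum_const, nsmul_eq_mul, neg_sq]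
  ring

lemma inside_au (d c : ℕ) (adjA : Fin (c+1) → ℤ) (av : Fin d → ℤ) :
    ∑ coord, (aPoint d c adjA av coord - u d c coord)^2
      = (∑ j, ((adjA j:ℝ) - if j = 0 then 1 else 0)^2) + ∑ t, (av t:ℝ)^2 := by
  simp [aPoint, u, Fintype.sum_sum_type]

lemma inside_vb (d c : ℕ) (N : ℝ) (adjB : Fin (c+1) → ℤ) (bv : Fin d → ℤ) :
    ∑ coord, (v d c N coord - bPoint d c N adjB bv coord)^2
      = (∑ j, ((adjB j:ℝ) - if j = 0 then 1 else 0)^2) + ∑ t, (bv t:ℝ)^2 := by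
  have h : ∀ j : Fin (c+1), ((if j = (0:Fin (c+1)) then (1:ℝ) else 0) - (adjB j:ℝ))^2
      = ((adjB j:ℝ) - if j = 0 then 1 else 0)^2 := fun j => by ring
  simp [v, bPoint, Fintype.sum_sum_type, neg_sq, h]

lemma inside_vu (d c : ℕ) (N : ℝ) :
    ∑ coord, (v d c N coord - u d c coord)^2 = N^2*(d:ℝ) + 2 := by
  have h : ∀ j : Fin (c+1), ((if j = (0:Fin (c+1)) then (1:ℝ) else 0))^2
      = (if j = (0:Fin (c+1)) then (1:ℝ) else 0) := fun j => by split <;> ring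
  simp [v, u, Fintype.sum_sum_type, Finset.sum_const, nsmul_eq_mul, neg_sq, h,
    Finset.sum_ite_eq']
  ring

/-- Auxiliary permutation swapping `some`-elements of the left summand with the right. -/
def mid (α : Type*) : Option α ⊕ α ≃ Option α ⊕ α where
  toFun x := match x with
    | .inl none => .inl none
    | .inl (some r) => .inr r
    | .inr r => .inl (some r)
  invFun x := match x with
    | .inl none => .inl none
    | .inl (some r) => .inr r
    | .inr r => .inl (some r)
  left_inv x := by rcases x with (_|_)|_ <;> rfl
  right_inv x := by rcases x with (_|_)|_ <;> rfl

lemma count_indicator (n m : ℕ) (σ : Equiv.Perm (Fin n ⊕ Fin m)) :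
    (∑ i : Fin n, (if (σ (Sum.inl i)).isLeft then (1:ℝ) else 0))
      + (∑ r : Fin m, (if (σ (Sum.inr r)).isLeft then (1:ℝ) else 0)) = n := by
  classical
  have key : ∑ x : Fin n ⊕ Fin m, (if (σ x).isLeft then (1:ℝ) else 0)
      = ∑ y : Fin n ⊕ Fin m, (if y.isLeft then (1:ℝ) else 0) :=
    Equiv.sum_comp σ (fun y => if y.isLeft then (1:ℝ) else 0)
  rw [Fintype.sum_sum_type, Fintype.sum_sum_type] at key
  simp only [Sum.isLeft_inl, Sum.isLeft_inr, if_true, if_false, reduceIte,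
    Finset.sum_const, Finset.card_univ, Fintype.card_fin, nsmul_eq_mul, mul_one,
    mul_zero, add_zero] at key
  simpa using key

/-- The Earth Mover Distance (minimum over bijections of the sum of Euclidean distances)
between the families `P` and `Q` constructed from a bichromatic-closest-pair instance equals
`2(n-1) n^{2k} d + min_{i,j} sqrt(N² d + 2 n^{4k} d² + ‖a_i - b_j‖²)` where `N = n^{16k}`. -/
theorem emd_of_closest_pair_instance (n k c d : ℕ)
    (hn : 2 ≤ n) (hk : 1 ≤ k) (hc : 1 ≤ c) (hd : 1 ≤ d) (hdn : d ≤ n)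
    (a b : Fin n → Fin d → ℤ)
    (ha : ∀ i t, 1 ≤ a i t ∧ a i t ≤ (n : ℤ) ^ k)
    (hb : ∀ j t, 1 ≤ b j t ∧ b j t ≤ (n : ℤ) ^ k)
    (hoddA : ∀ i, Odd (∑ t, (a i t) ^ 2))
    (hoddB : ∀ j, Odd (∑ t, (b j t) ^ 2))
    (adjA adjB : Fin n → Fin (c + 1) → ℤ)
    (hadjA0 : ∀ i, adjA i 0 = ((∑ t, (a i t) ^ 2) + 1) / 2)
    (hadjA : ∀ i, ∑ j, (adjA i j) ^ 2 = (n : ℤ) ^ (4 * k) * (d : ℤ) ^ 2)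
    (hadjB0 : ∀ j, adjB j 0 = ((∑ t, (b j t) ^ 2) + 1) / 2)
    (hadjB : ∀ j, ∑ i, (adjB j i) ^ 2 = (n : ℤ) ^ (4 * k) * (d : ℤ) ^ 2) :
    (⨅ σ : Equiv.Perm (Fin n ⊕ Fin (n - 1)),
        ∑ x, Real.sqrt (∑ coord,
          (P n d c ((n : ℝ) ^ (16 * k)) adjA a x coord
            - Q n d c ((n : ℝ) ^ (16 * k)) adjB b (σ x) coord) ^ 2)) =
      2 * ((n : ℝ) - 1) * (n : ℝ) ^ (2 * k) * (d : ℝ) +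
        ⨅ i : Fin n, ⨅ j : Fin n,
          Real.sqrt (((n : ℝ) ^ (16 * k)) ^ 2 * (d : ℝ)
            + 2 * (n : ℝ) ^ (4 * k) * (d : ℝ) ^ 2
            + ∑ t, ((a i t : ℝ) - (b j t : ℝ)) ^ 2) := by
  have hn1R : (1:ℝ) ≤ (n:ℝ) := by exact_mod_cast (by omega : 1 ≤ n)
  have hdR : (1:ℝ) ≤ (d:ℝ) := by exact_mod_cast hd
  set Nr : ℝ := (n:ℝ) ^ (16*k) with hNrdef
  set M : ℝ := (n:ℝ)^(2*k) * (d:ℝ) with hMdef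
  set Cs : Fin n → Fin n → ℝ := fun i j =>
    Real.sqrt (Nr ^ 2 * (d : ℝ) + 2 * (n : ℝ) ^ (4 * k) * (d : ℝ) ^ 2
      + ∑ t, ((a i t : ℝ) - (b j t : ℝ)) ^ 2) with hCsdef
  set L : ℝ := Real.sqrt (Nr^2*(d:ℝ) + 2) with hLdef
  set B : ℝ := Real.sqrt (Nr^2*(d:ℝ)) with hBdef
  set F : Equiv.Perm (Fin n ⊕ Fin (n-1)) → ℝ := fun σ =>
    ∑ x, Real.sqrt (∑ coord,
      (P n d c Nr adjA a x coord - Q n d c Nr adjB b (σ x) coord) ^ 2) with hFdef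
  -- basic positivity
  have hM0 : 0 ≤ M := by positivity
  -- cast of adjustment norms
  have hA2 : ∀ i, (∑ j, ((adjA i j:ℝ))^2) = (n:ℝ)^(4*k)*(d:ℝ)^2 := by
    intro i
    have := congrArg (fun z : ℤ => (z:ℝ)) (hadjA i)
    push_cast at this; exact this
  have hB2 : ∀ j, (∑ i, ((adjB j i:ℝ))^2) = (n:ℝ)^(4*k)*(d:ℝ)^2 := by
    intro j
    have := congrArg (fun z : ℤ => (z:ℝ)) (hadjB j)
    push_cast at this; exact this
  have hpow : (n:ℝ)^(4*k)*(d:ℝ)^2 = M^2 := by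
    rw [hMdef, mul_pow, ← pow_mul]
    congr 2
    omega
  -- value of the four kinds of distances
  have cAB : ∀ i j, Real.sqrt (∑ coord,
      (P n d c Nr adjA a (Sum.inl i) coord - Q n d c Nr adjB b (Sum.inl j) coord) ^ 2)
      = Cs i j := by
    intro i j
    simp only [P, Q, Sum.elim_inl]
    rw [inside_ab]
    congr 1
    rw [hA2 i, hB2 j]
    ring
  have cAU : ∀ i (r : Fin (n-1)), Real.sqrt (∑ coord,
      (P n d c Nr adjA a (Sum.inl i) coord - Q n d c Nr adjB b (Sum.inr r) coord) ^ 2)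
      = M := by
    intro i r
    simp only [P, Q, Sum.elim_inl, Sum.elim_inr]
    rw [inside_au, sum_delta_sq]
    have h2 : 2 * adjA i 0 = (∑ t, (a i t)^2) + 1 := by
      obtain ⟨mm, hmm⟩ := hoddA i
      rw [hadjA0 i]
      omega
    have h2R : 2 * ((adjA i 0 : ℤ):ℝ) = (∑ t, ((a i t:ℝ))^2) + 1 := by
      have := congrArg (fun z : ℤ => (z:ℝ)) h2
      push_cast at this
      exact this
    have : (∑ j, ((adjA i j:ℝ))^2) - 2*((adjA i 0:ℤ):ℝ) + 1 + ∑ t, ((a i t:ℝ))^2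
        = M^2 := by
      rw [hA2 i, h2R] at *
      nlinarith [hA2 i, h2R, hpow]
    rw [this]
    exact Real.sqrt_sq hM0
  have cVB : ∀ (r : Fin (n-1)) j, Real.sqrt (∑ coord,
      (P n d c Nr adjA a (Sum.inr r) coord - Q n d c Nr adjB b (Sum.inl j) coord) ^ 2)
      = M := by
    intro r j
    simp only [P, Q, Sum.elim_inl, Sum.elim_inr]
    rw [inside_vb, sum_delta_sq]
    have h2 : 2 * adjB j 0 = (∑ t, (b j t)^2) + 1 := by
      obtain ⟨mm, hmm⟩ := hoddB j
      rw [hadjB0 j]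
      omega
    have h2R : 2 * ((adjB j 0 : ℤ):ℝ) = (∑ t, ((b j t:ℝ))^2) + 1 := by
      have := congrArg (fun z : ℤ => (z:ℝ)) h2
      push_cast at this
      exact this
    have : (∑ i, ((adjB j i:ℝ))^2) - 2*((adjB j 0:ℤ):ℝ) + 1 + ∑ t, ((b j t:ℝ))^2
        = M^2 := by
      nlinarith [hB2 j, h2R, hpow]
    rw [this]
    exact Real.sqrt_sq hM0
  have cVU : ∀ (r r' : Fin (n-1)), Real.sqrt (∑ coord,
      (P n d c Nr adjA a (Sum.inr r) coord - Q n d c Nr adjB b (Sum.inr r') coord) ^ 2)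
      = L := by
    intro r r'
    simp only [P, Q, Sum.elim_inr]
    rw [inside_vu]
  -- comparison inequalities
  have hMB : M ≤ B := by
    have hM2 : M^2 ≤ Nr^2*(d:ℝ) := by
      have e1 : M^2 = (n:ℝ)^(4*k)*(d:ℝ)^2 := hpow.symm
      have e2 : Nr^2 = (n:ℝ)^(32*k) := by
        rw [hNrdef, ← pow_mul]; congr 1; omega
      have h3 : (n:ℝ)^(4*k+1) ≤ (n:ℝ)^(32*k) := pow_le_pow_right₀ hn1R (by omega)
      have h4 : (d:ℝ) ≤ (n:ℝ) := by exact_mod_cast hdn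
      have h5 : (0:ℝ) ≤ (n:ℝ)^(4*k) := by positivity
      have h6 : (n:ℝ)^(4*k)*(n:ℝ) = (n:ℝ)^(4*k+1) := by rw [pow_succ]
      nlinarith [h5, h4, hdR]
    calc M = Real.sqrt (M^2) := (Real.sqrt_sq hM0).symm
      _ ≤ B := Real.sqrt_le_sqrt hM2
  have hBL : B ≤ L := Real.sqrt_le_sqrt (by linarith)
  have hBC : ∀ i j, B ≤ Cs i j := by
    intro i j
    apply Real.sqrt_le_sqrt
    have : (0:ℝ) ≤ 2 * (n : ℝ) ^ (4 * k) * (d : ℝ) ^ 2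
        + ∑ t, ((a i t : ℝ) - (b j t : ℝ)) ^ 2 := by positivity
    linarith
  -- the minimum of Cs is attained
  have hne : Nonempty (Fin n) := ⟨⟨0, by omega⟩⟩
  obtain ⟨⟨i₀, j₀⟩, hmin⟩ := Finite.exists_min (fun p : Fin n × Fin n => Cs p.1 p.2)
  have hinf2 : (⨅ i, ⨅ j, Cs i j) = Cs i₀ j₀ := by
    apply le_antisymm
    · exact le_trans (ciInf_le (Set.finite_range _).bddBelow i₀)
        (ciInf_le (Set.finite_range _).bddBelow j₀)
    · exact le_ciInf fun i => le_ciInf fun j => hmin (i, j)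
  have hcast1 : ((n - 1 : ℕ) : ℝ) = (n:ℝ) - 1 := by
    rw [Nat.cast_sub (by omega)]; norm_num
  -- ============ lower bound ============
  have lower : ∀ σ : Equiv.Perm (Fin n ⊕ Fin (n-1)),
      2 * ((n : ℝ) - 1) * M + Cs i₀ j₀ ≤ F σ := by
    intro σ
    classical
    set f1 : Fin n → ℝ := fun i => Real.sqrt (∑ coord,
        (P n d c Nr adjA a (Sum.inl i) coord - Q n d c Nr adjB b (σ (Sum.inl i)) coord) ^ 2)
      with hf1def
    set f2 : Fin (n-1) → ℝ := fun r => Real.sqrt (∑ coord,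
        (P n d c Nr adjA a (Sum.inr r) coord - Q n d c Nr adjB b (σ (Sum.inr r)) coord) ^ 2)
      with hf2def
    have hsplit : F σ = (∑ i : Fin n, f1 i) + ∑ r : Fin (n-1), f2 r := by
      rw [hFdef]
      exact Fintype.sum_sum_type _
    set c1 : ℝ := ∑ i : Fin n, (if (σ (Sum.inl i)).isLeft then (1:ℝ) else 0) with hc1def
    set c2 : ℝ := ∑ r : Fin (n-1), (if (σ (Sum.inr r)).isLeft then (1:ℝ) else 0) with hc2def
    have hcnt : c1 + c2 = n := count_indicator n (n-1) σ
    have hc2le : c2 ≤ (n:ℝ) - 1 := by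
      have h1 : c2 ≤ ∑ _r : Fin (n-1), (1:ℝ) := by
        rw [hc2def]
        apply Finset.sum_le_sum
        intro r _
        split <;> norm_num
      rw [Finset.sum_const, Finset.card_univ, Fintype.card_fin, nsmul_eq_mul, mul_one,
        hcast1] at h1
      exact h1
    have hc1ge : 1 ≤ c1 := by linarith
    -- pointwise values
    have hf1 : ∀ i : Fin n, (if (σ (Sum.inl i)).isLeft then B else M) ≤ f1 i := by
      intro i
      by_cases h : (σ (Sum.inl i)).isLeft
      · obtain ⟨j, hj⟩ := Sum.isLeft_iff.mp h
        rw [if_pos h, hf1def]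
        simp only []
        rw [hj, cAB i j]
        exact hBC i j
      · obtain ⟨r, hr⟩ := Sum.isRight_iff.mp (Sum.not_isLeft.mp h)
        rw [if_neg h, hf1def]
        simp only []
        rw [hr, cAU i r]
    have hf2 : ∀ r : Fin (n-1), f2 r = (if (σ (Sum.inr r)).isLeft then M else L) := by
      intro r
      by_cases h : (σ (Sum.inr r)).isLeft
      · obtain ⟨j, hj⟩ := Sum.isLeft_iff.mp h
        rw [if_pos h, hf2def]
        simp only []
        rw [hj, cVB r j]
      · obtain ⟨r', hr'⟩ := Sum.isRight_iff.mp (Sum.not_isLeft.mp h)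
        rw [if_neg h, hf2def]
        simp only []
        rw [hr', cVU r r']
    -- there is some i₁ with σ (inl i₁) on the left
    have hex : ∃ i₁ : Fin n, (σ (Sum.inl i₁)).isLeft := by
      by_contra hno
      push_neg at hno
      have : c1 = 0 := by
        rw [hc1def]
        apply Finset.sum_eq_zero
        intro i _
        rw [if_neg (by simpa using hno i)]
      linarith
    obtain ⟨i₁, hi₁⟩ := hex
    have hspecial : Cs i₀ j₀ ≤ f1 i₁ := by
      obtain ⟨j, hj⟩ := Sum.isLeft_iff.mp hi₁
      rw [hf1def]
      simp only []
      rw [hj, cAB i₁ j]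
      exact hmin (i₁, j)
    -- sum bounds
    have hsum1 : Cs i₀ j₀ - B + ((n:ℝ) * M + (B - M) * c1) ≤ ∑ i : Fin n, f1 i := by
      have e1 : ∀ i : Fin n, (if (σ (Sum.inl i)).isLeft then B else M)
          = M + (B - M) * (if (σ (Sum.inl i)).isLeft then (1:ℝ) else 0) := by
        intro i; split <;> ring
      have e2 : ∑ i : Fin n, (if (σ (Sum.inl i)).isLeft then B else M)
          = (n:ℝ) * M + (B - M) * c1 := by
        rw [Finset.sum_congr rfl (fun i _ => e1 i), Finset.sum_add_distrib,
          Finset.sum_const, Finset.card_univ, Fintype.card_fin, nsmul_eq_mul,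
          ← Finset.mul_sum, hc1def]
      have e3 : ∑ i : Fin n, f1 i
          = f1 i₁ + ∑ i ∈ Finset.univ.erase i₁, f1 i := by
        rw [Finset.add_sum_erase _ f1 (Finset.mem_univ i₁)]
      have e4 : ∑ i : Fin n, (if (σ (Sum.inl i)).isLeft then B else M)
          = B + ∑ i ∈ Finset.univ.erase i₁, (if (σ (Sum.inl i)).isLeft then B else M) := by
        rw [← Finset.add_sum_erase _ (fun i => if (σ (Sum.inl i)).isLeft then B else M)
          (Finset.mem_univ i₁), if_pos hi₁]
      have e5 : ∑ i ∈ Finset.univ.erase i₁, (if (σ (Sum.inl i)).isLeft then B else M)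
          ≤ ∑ i ∈ Finset.univ.erase i₁, f1 i :=
        Finset.sum_le_sum (fun i _ => hf1 i)
      linarith [e2, e3, e4, e5]
    have hsum2 : ∑ r : Fin (n-1), f2 r = ((n:ℝ) - 1) * L + (M - L) * c2 := by
      have e1 : ∀ r : Fin (n-1), (if (σ (Sum.inr r)).isLeft then M else L)
          = L + (M - L) * (if (σ (Sum.inr r)).isLeft then (1:ℝ) else 0) := by
        intro r; split <;> ring
      rw [Finset.sum_congr rfl (fun r _ => (hf2 r).trans (e1 r)), Finset.sum_add_distrib]
      simp only [Finset.sum_const, Finset.card_univ, Fintype.card_fin, nsmul_eq_mul,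
        ← Finset.mul_sum]
      rw [← hc2def, hcast1]
    rw [hsplit, hsum2]
    have hkey : (c1 - 1) * (B + L - 2*M) ≥ 0 :=
      mul_nonneg (by linarith) (by linarith)
    nlinarith [hsum1, hkey, hcnt, hc1ge, hM0, hMB, hBL]
  -- ============ upper bound : witness permutation ============
  have hpred : n = n - 1 + 1 := by omega
  have upper : ∃ σ : Equiv.Perm (Fin n ⊕ Fin (n-1)),
      F σ = 2 * ((n : ℝ) - 1) * M + Cs i₀ j₀ := by
    classical
    let z : Fin n := ⟨0, by omega⟩
    let e1 : Fin n ≃ Option (Fin (n-1)) :=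
      (Equiv.swap i₀ z).trans ((finCongr hpred).trans (finSuccEquiv (n-1)))
    let g1 : Fin n ≃ Option (Fin (n-1)) :=
      (Equiv.swap j₀ z).trans ((finCongr hpred).trans (finSuccEquiv (n-1)))
    have hz0 : (finCongr hpred) z = (0 : Fin (n-1+1)) := by
      apply Fin.ext
      simp [z]
    have he1 : e1.symm none = i₀ := by
      apply e1.injective
      simp only [Equiv.apply_symm_apply]
      simp [e1, Equiv.swap_apply_left, hz0]
    have hg1 : g1.symm none = j₀ := by
      apply g1.injective
      simp only [Equiv.apply_symm_apply]
      simp [g1, Equiv.swap_apply_left, hz0]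
    let eP : (Fin n ⊕ Fin (n-1)) ≃ (Option (Fin (n-1)) ⊕ Fin (n-1)) :=
      Equiv.sumCongr e1 (Equiv.refl _)
    let eQ : (Fin n ⊕ Fin (n-1)) ≃ (Option (Fin (n-1)) ⊕ Fin (n-1)) :=
      Equiv.sumCongr g1 (Equiv.refl _)
    let σ₀ : Equiv.Perm (Fin n ⊕ Fin (n-1)) := (eP.trans (mid _)).trans eQ.symm
    refine ⟨σ₀, ?_⟩
    have hF : F σ₀ = ∑ y : Option (Fin (n-1)) ⊕ Fin (n-1),
        Real.sqrt (∑ coord,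
          (P n d c Nr adjA a (eP.symm y) coord
            - Q n d c Nr adjB b (σ₀ (eP.symm y)) coord) ^ 2) := by
      rw [hFdef]
      exact (Equiv.sum_comp eP.symm _).symm
    rw [hF]
    have hστ : ∀ y, σ₀ (eP.symm y) = eQ.symm (mid _ y) := by
      intro y
      simp [σ₀, Equiv.trans_apply]
    rw [Fintype.sum_sum_type, Fintype.sum_option]
    have t1 : Real.sqrt (∑ coord,
        (P n d c Nr adjA a (eP.symm (Sum.inl none)) coord
          - Q n d c Nr adjB b (σ₀ (eP.symm (Sum.inl none))) coord) ^ 2) = Cs i₀ j₀ := by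
      rw [hστ]
      have h1 : eP.symm (Sum.inl none) = Sum.inl i₀ := by simp [eP, he1]
      have h2 : eQ.symm (mid _ (Sum.inl none)) = Sum.inl j₀ := by
        show eQ.symm (Sum.inl none) = Sum.inl j₀
        simp [eQ, hg1]
      rw [h1, h2, cAB]
    have t2 : ∀ r : Fin (n-1), Real.sqrt (∑ coord,
        (P n d c Nr adjA a (eP.symm (Sum.inl (some r))) coord
          - Q n d c Nr adjB b (σ₀ (eP.symm (Sum.inl (some r)))) coord) ^ 2) = M := by
      intro r
      rw [hστ]
      have h1 : eP.symm (Sum.inl (some r)) = Sum.inl (e1.symm (some r)) := by simp [eP]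
      have h2 : eQ.symm (mid _ (Sum.inl (some r))) = Sum.inr r := by
        show eQ.symm (Sum.inr r) = Sum.inr r
        simp [eQ]
      rw [h1, h2, cAU]
    have t3 : ∀ r : Fin (n-1), Real.sqrt (∑ coord,
        (P n d c Nr adjA a (eP.symm (Sum.inr r)) coord
          - Q n d c Nr adjB b (σ₀ (eP.symm (Sum.inr r))) coord) ^ 2) = M := by
      intro r
      rw [hστ]
      have h1 : eP.symm (Sum.inr r) = Sum.inr r := by simp [eP]
      have h2 : eQ.symm (mid _ (Sum.inr r)) = Sum.inl (g1.symm (some r)) := by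
        show eQ.symm (Sum.inl (some r)) = Sum.inl (g1.symm (some r))
        simp [eQ]
      rw [h1, h2, cVB]
    rw [t1, Finset.sum_congr rfl (fun r _ => t2 r), Finset.sum_congr rfl (fun r _ => t3 r)]
    simp only [Finset.sum_const, Finset.card_univ, Fintype.card_fin, nsmul_eq_mul]
    rw [hcast1]
    ring
  -- ============ conclusion ============
  obtain ⟨σ₀, hσ₀⟩ := upper
  rw [hinf2]
  have goalM : 2 * ((n : ℝ) - 1) * (n : ℝ) ^ (2 * k) * (d : ℝ)
      = 2 * ((n : ℝ) - 1) * M := by rw [hMdef]; ring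
  rw [goalM]
  apply le_antisymm
  · calc (⨅ σ : Equiv.Perm (Fin n ⊕ Fin (n-1)), F σ) ≤ F σ₀ :=
        ciInf_le (Set.finite_range _).bddBelow σ₀
      _ = 2 * ((n : ℝ) - 1) * M + Cs i₀ j₀ := hσ₀
  · exact le_ciInf lower

end EMDReduction
end

section
/- Let m <= n be natural numbers, d >= 1, and let a : Fin m -> {0,1}^d and b : Fin n -> {0,1}^d be families of 0/1 vectors, viewed as vectors in R^d. Define A' : Fin n -> R^(2d) by A'_i = (a_i, 1 - a_i) (the concatenation of a_i with its coordinatewise complement) for i < m, and A'_i = 0 (the zero vector) for m <= i < n; define B'_j = (b_j, 1 - b_j) for all j < n. Then the minimum over all permutations sigma of Fin n of sum_{j < n} ||A'_j - B'_{sigma(j)}||_2 equals (n - m) * sqrt(d) + sqrt(2) * (the minimum over all injections pi : Fin m -> Fin n of sum_{i < m} ||a_i - b_{pi(i)}||_2). -/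
/-!
The map `x ↦ (x, 1 - x)` scales distances by exactly `√2`, and every padded vector
`(y, 1 - y)` with `y ∈ {0,1}^d` lies at distance exactly `√d` from the origin. Hence a
permutation `σ` of the padded instance costs `(n - m)√d + √2 · cost(π)`, where `π` is the
restriction of `σ` to the first `m` indices; every injection arises as such a restriction.
-/

open Finset

section Doubling

variable {ι : Type*} [Fintype ι]

theorem sqrt_sum_sq_sub_sumElim_one_sub (x y : ι → ℝ) :
    √(∑ p : ι ⊕ ι,
        (Sum.elim x (fun t => 1 - x t) p - Sum.elim y (fun t => 1 - y t) p) ^ 2) =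
      √2 * √(∑ t, (x t - y t) ^ 2) := by
  rw [← Real.sqrt_mul zero_le_two, Fintype.sum_sum_type, mul_sum, ← sum_add_distrib]
  congr 1
  refine sum_congr rfl fun t _ => ?_
  simp only [Sum.elim_inl, Sum.elim_inr]
  ring

theorem sqrt_sum_sq_sumElim_one_sub_of_boolean (y : ι → ℝ) (hy : ∀ t, y t = 0 ∨ y t = 1) :
    √(∑ p : ι ⊕ ι, ((0 : ℝ) - Sum.elim y (fun t => 1 - y t) p) ^ 2) =
      √(Fintype.card ι) := by
  have hunit : ∀ t, ((0 : ℝ) - y t) ^ 2 + (0 - (1 - y t)) ^ 2 = 1 := fun t => by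
    rcases hy t with h | h <;> rw [h] <;> norm_num
  rw [Fintype.sum_sum_type, ← sum_add_distrib]
  simp only [Sum.elim_inl, Sum.elim_inr, hunit, sum_const, card_univ, nsmul_one]

end Doubling

theorem Fin.sum_dite_lt_eq_add_nsmul {M : Type*} [AddCommMonoid M] {m n : ℕ} (hmn : m ≤ n)
    (f : Fin m → M) (c : M) :
    ∑ j : Fin n, (if h : (j : ℕ) < m then f ⟨j, h⟩ else c) = ∑ i, f i + (n - m) • c := by
  obtain ⟨k, rfl⟩ := Nat.exists_eq_add_of_le hmn
  simp [Fin.sum_univ_add]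

theorem Equiv.Perm.surjective_trans_toEmbedding {α β : Type*} [Finite α] (f : α ↪ β) :
    Function.Surjective fun σ : Equiv.Perm β => f.trans σ.toEmbedding := fun g => by
  obtain ⟨σ, hσ⟩ := Equiv.Perm.exists_extending_pair f g f.injective g.injective
  exact ⟨σ, Function.Embedding.ext hσ⟩

theorem Real.add_mul_ciInf {ι : Sort*} [Nonempty ι] {g : ι → ℝ} (hg : BddBelow (Set.range g))
    (c : ℝ) {k : ℝ} (hk : 0 ≤ k) : c + k * ⨅ i, g i = ⨅ i, (c + k * g i) :=
  Monotone.map_ciInf_of_continuousAt (f := fun x => c + k * x) (by fun_prop)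
    (fun _ _ hxy => by dsimp only; gcongr) hg

theorem padded_emd_eq_asymmetric_emd_general (d m n : ℕ) (hmn : m ≤ n)
    (a : Fin m → Fin d → ℝ) (b : Fin n → Fin d → ℝ)
    (hb : ∀ j t, b j t = 0 ∨ b j t = 1) :
    (⨅ σ : Equiv.Perm (Fin n),
        ∑ j : Fin n, Real.sqrt (∑ p : Fin d ⊕ Fin d,
          ((if h : (j : ℕ) < m then
              Sum.elim (a ⟨j, h⟩) (fun t => 1 - a ⟨j, h⟩ t) p
            else 0)
            - Sum.elim (b (σ j)) (fun t => 1 - b (σ j) t) p) ^ 2)) =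
      ((n : ℝ) - (m : ℝ)) * Real.sqrt d +
        Real.sqrt 2 * ⨅ π : Fin m ↪ Fin n,
          ∑ i : Fin m, Real.sqrt (∑ t, (a i t - b (π i) t) ^ 2) := by
  set cost : (Fin m ↪ Fin n) → ℝ := fun π => ∑ i, √(∑ t, (a i t - b (π i) t) ^ 2)
  have : Nonempty (Fin m ↪ Fin n) := ⟨Fin.castLEEmb hmn⟩
  calc _ = ⨅ σ : Equiv.Perm (Fin n),
        ((n : ℝ) - m) * √d + √2 * cost ((Fin.castLEEmb hmn).trans σ.toEmbedding) :=
        iInf_congr fun σ => ?_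
    _ = ⨅ π, ((n : ℝ) - m) * √d + √2 * cost π :=
        (Equiv.Perm.surjective_trans_toEmbedding _).iInf_comp fun π => _ + √2 * cost π
    _ = _ := (Real.add_mul_ciInf (Set.finite_range cost).bddBelow _ (Real.sqrt_nonneg 2)).symm
  set f : Fin m → ℝ := fun i => √2 * √(∑ t, (a i t - b (σ (Fin.castLE hmn i)) t) ^ 2)
  calc _ = ∑ j : Fin n, (if h : (j : ℕ) < m then f ⟨j, h⟩ else √d) := by
        refine sum_congr rfl fun j _ => ?_
        split_ifs
        · exact sqrt_sum_sq_sub_sumElim_one_sub _ _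
        · simpa using sqrt_sum_sq_sumElim_one_sub_of_boolean _ (hb (σ j))
    _ = ∑ i, f i + (n - m : ℕ) • √d := Fin.sum_dite_lt_eq_add_nsmul hmn f _
    _ = _ := by
        rw [← mul_sum, nsmul_eq_mul, Nat.cast_sub hmn, add_comm]
        rfl

/-- The Earth Mover Distance of the padded symmetric instance (obtained from the
complementation embedding `x ↦ (x, 1-x)` plus `n-m` zero vectors) equals
`(n-m)·√d + √2 · (asymmetric EMD of the original instance)`, where the asymmetric EMD
is the minimum over injections `π : Fin m ↪ Fin n` of `∑ i, ‖a i - b (π i)‖₂`. -/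
theorem padded_emd_eq_asymmetric_emd (d m n : ℕ) (hd : 1 ≤ d) (hmn : m ≤ n)
    (a : Fin m → Fin d → ℝ) (b : Fin n → Fin d → ℝ)
    (ha : ∀ i t, a i t = 0 ∨ a i t = 1)
    (hb : ∀ j t, b j t = 0 ∨ b j t = 1) :
    (⨅ σ : Equiv.Perm (Fin n),
        ∑ j : Fin n, Real.sqrt (∑ p : Fin d ⊕ Fin d,
          ((if h : (j : ℕ) < m then
              Sum.elim (a ⟨j, h⟩) (fun t => 1 - a ⟨j, h⟩ t) p
            else 0)
            - Sum.elim (b (σ j)) (fun t => 1 - b (σ j) t) p) ^ 2)) =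
      ((n : ℝ) - (m : ℝ)) * Real.sqrt d +
        Real.sqrt 2 * ⨅ π : Fin m ↪ Fin n,
          ∑ i : Fin m, Real.sqrt (∑ t, (a i t - b (π i) t) ^ 2) :=
  padded_emd_eq_asymmetric_emd_general d m n hmn a b hb
end

section
/- For every d >= 1 there exist maps Phi1, Phi2 : {0,1}^d -> {0,1}^(12d+1) and a vector v in {0,1}^(12d+1) such that for all a, b in {0,1}^d: (i) ||Phi1(a) - Phi2(b)||^2 = 2*(a . b) + 4d + 2, and (ii) ||Phi1(a) - v||^2 = 4d + 4. In particular, ||Phi1(a) - Phi2(b)|| = sqrt(4d+2) if a . b = 0, and ||Phi1(a) - Phi2(b)|| >= sqrt(4d+4) otherwise. -/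
open Finset

private lemma sum_range_three_mul (d : ℕ) (f : ℕ → ℝ) :
    ∑ j ∈ Finset.range (3*d), f j
      = ∑ i ∈ Finset.range d, (f (3*i) + f (3*i+1) + f (3*i+2)) := by
  induction d with
  | zero => simp
  | succ n ih =>
    have h3 : 3*(n+1) = 3*n + 1 + 1 + 1 := by ring
    rw [h3, Finset.sum_range_succ, Finset.sum_range_succ, Finset.sum_range_succ, ih,
      Finset.sum_range_succ]
    ring

/-- Composite orthogonality-to-distance gadget: there are maps
`Φ₁, Φ₂ : {0,1}^d → {0,1}^{12d+1}` and an auxiliary vector `v ∈ {0,1}^{12d+1}` such that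
`‖Φ₁(a) - Φ₂(b)‖² = 2(a⬝b) + 4d + 2` and `‖Φ₁(a) - v‖² = 4d + 4` for all `a, b ∈ {0,1}^d`.
In particular `‖Φ₁(a) - Φ₂(b)‖ = √(4d+2)` when `a ⬝ b = 0`, and
`‖Φ₁(a) - Φ₂(b)‖ ≥ √(4d+4)` otherwise. -/
theorem orthogonality_distance_gadget (d : ℕ) (hd : 1 ≤ d) :
    ∃ Φ₁ Φ₂ : (Fin d → ℝ) → (Fin (12 * d + 1) → ℝ),
      ∃ v : Fin (12 * d + 1) → ℝ,
        (∀ j, v j = 0 ∨ v j = 1) ∧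
        ∀ a b : Fin d → ℝ,
          (∀ i, a i = 0 ∨ a i = 1) → (∀ i, b i = 0 ∨ b i = 1) →
            (∀ j, Φ₁ a j = 0 ∨ Φ₁ a j = 1) ∧
            (∀ j, Φ₂ b j = 0 ∨ Φ₂ b j = 1) ∧
            (∑ j, (Φ₁ a j - Φ₂ b j) ^ 2 = 2 * (∑ i, a i * b i) + 4 * d + 2) ∧
            (∑ j, (Φ₁ a j - v j) ^ 2 = 4 * d + 4) ∧
            ((∑ i, a i * b i = 0 →
              Real.sqrt (∑ j, (Φ₁ a j - Φ₂ b j) ^ 2) = Real.sqrt (4 * d + 2)) ∧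
             (∑ i, a i * b i ≠ 0 →
              Real.sqrt (4 * d + 4) ≤ Real.sqrt (∑ j, (Φ₁ a j - Φ₂ b j) ^ 2))) := by
  classical
  set A : (Fin d → ℝ) → ℕ → ℝ := fun a n => if h : n < d then a ⟨n, h⟩ else 0 with hA
  set g1 : (Fin d → ℝ) → ℕ → ℝ := fun a n =>
    if n < 3*d then (if n % 3 = 2 then 0 else A a (n/3)) else 0 with hg1
  set g2 : (Fin d → ℝ) → ℕ → ℝ := fun b n =>
    if n < 3*d then
      (if n % 3 = 0 then 1 - A b (n/3) else if n % 3 = 1 then 0 else A b (n/3))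
    else (if n < 6*d+2 then 1 else 0) with hg2
  set vf : ℕ → ℝ := fun n =>
    if n < 3*d then (if n % 3 = 1 then 1 else 0)
    else (if n < 6*d+4 then 1 else 0) with hvf
  refine ⟨fun a j => g1 a j.val, fun b j => g2 b j.val, fun j => vf j.val, ?_, ?_⟩
  · intro j
    simp only [hvf]
    split_ifs <;> simp
  intro a b ha hb
  have hAa : ∀ n, A a n = 0 ∨ A a n = 1 := by
    intro n; simp only [hA]; split_ifs with h
    · exact ha _
    · exact Or.inl rfl
  have hAb : ∀ n, A b n = 0 ∨ A b n = 1 := by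
    intro n; simp only [hA]; split_ifs with h
    · exact hb _
    · exact Or.inl rfl
  -- dot product as range-sum
  have hdot : (∑ i, a i * b i) = ∑ n ∈ Finset.range d, A a n * A b n := by
    rw [Finset.sum_range fun n => A a n * A b n]
    refine Finset.sum_congr rfl fun i _ => ?_
    simp only [hA, i.isLt, dif_pos]
  -- main sum split helper
  have hsplit : ∀ f : ℕ → ℝ,
      ∑ j : Fin (12*d+1), f j.val
        = (∑ n ∈ Finset.range (3*d), f n) + (∑ n ∈ Finset.Ico (3*d) (6*d+2), f n)
          + (∑ n ∈ Finset.Ico (6*d+2) (6*d+4), f n)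
          + (∑ n ∈ Finset.Ico (6*d+4) (12*d+1), f n) := by
    intro f
    rw [Fin.sum_univ_eq_sum_range f (12*d+1), Finset.range_eq_Ico,
      ← Finset.sum_Ico_consecutive f (by omega : 0 ≤ 3*d) (by omega : 3*d ≤ 12*d+1),
      ← Finset.sum_Ico_consecutive f (by omega : 3*d ≤ 6*d+2) (by omega : 6*d+2 ≤ 12*d+1),
      ← Finset.sum_Ico_consecutive f (by omega : 6*d+2 ≤ 6*d+4) (by omega : 6*d+4 ≤ 12*d+1),
      ← Finset.range_eq_Ico]
    ring
  -- values on block coordinates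
  have e1 : ∀ c : Fin d → ℝ, ∀ i, i < d → g1 c (3*i) = A c i := by
    intro c i hi; simp only [hg1]
    rw [if_pos (by omega), if_neg (by omega)]
    congr 1; omega
  have e2 : ∀ c : Fin d → ℝ, ∀ i, i < d → g1 c (3*i+1) = A c i := by
    intro c i hi; simp only [hg1]
    rw [if_pos (by omega), if_neg (by omega)]
    congr 1; omega
  have e3 : ∀ c : Fin d → ℝ, ∀ i, i < d → g1 c (3*i+2) = 0 := by
    intro c i hi; simp only [hg1]
    rw [if_pos (by omega), if_pos (by omega)]
  have f1 : ∀ c : Fin d → ℝ, ∀ i, i < d → g2 c (3*i) = 1 - A c i := by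
    intro c i hi; simp only [hg2]
    rw [if_pos (by omega), if_pos (by omega)]
    congr 2; omega
  have f2 : ∀ c : Fin d → ℝ, ∀ i, i < d → g2 c (3*i+1) = 0 := by
    intro c i hi; simp only [hg2]
    rw [if_pos (by omega), if_neg (by omega), if_pos (by omega)]
  have f3 : ∀ c : Fin d → ℝ, ∀ i, i < d → g2 c (3*i+2) = A c i := by
    intro c i hi; simp only [hg2]
    rw [if_pos (by omega), if_neg (by omega), if_neg (by omega)]
    congr 1; omega
  have w1 : ∀ i, i < d → vf (3*i) = 0 := by
    intro i hi; simp only [hvf]; rw [if_pos (by omega), if_neg (by omega)]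
  have w2 : ∀ i, i < d → vf (3*i+1) = 1 := by
    intro i hi; simp only [hvf]; rw [if_pos (by omega), if_pos (by omega)]
  have w3 : ∀ i, i < d → vf (3*i+2) = 0 := by
    intro i hi; simp only [hvf]; rw [if_pos (by omega), if_neg (by omega)]
  -- the two norm computations
  have S1 : ∑ j : Fin (12*d+1), (g1 a j.val - g2 b j.val)^2
      = 2 * (∑ i, a i * b i) + 4*(d:ℝ) + 2 := by
    rw [hsplit (fun n => (g1 a n - g2 b n)^2)]
    have B1 : ∑ n ∈ Finset.range (3*d), (g1 a n - g2 b n)^2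
        = (d : ℝ) + 2 * ∑ n ∈ Finset.range d, A a n * A b n := by
      rw [sum_range_three_mul]
      have hterm : ∀ i ∈ Finset.range d,
          ((g1 a (3*i) - g2 b (3*i))^2 + (g1 a (3*i+1) - g2 b (3*i+1))^2
            + (g1 a (3*i+2) - g2 b (3*i+2))^2) = 1 + 2 * (A a i * A b i) := by
        intro i hi
        rw [Finset.mem_range] at hi
        rw [e1 a i hi, e2 a i hi, e3 a i hi, f1 b i hi, f2 b i hi, f3 b i hi]
        rcases hAa i with h | h <;> rcases hAb i with h' | h' <;> rw [h, h'] <;> norm_num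
      rw [Finset.sum_congr rfl hterm, Finset.sum_add_distrib, Finset.sum_const,
        ← Finset.mul_sum, Finset.card_range]
      simp [mul_comm]
    have B2 : ∑ n ∈ Finset.Ico (3*d) (6*d+2), (g1 a n - g2 b n)^2 = 3*(d:ℝ)+2 := by
      have hc : ∀ n ∈ Finset.Ico (3*d) (6*d+2), (g1 a n - g2 b n)^2 = 1 := by
        intro n hn
        rw [Finset.mem_Ico] at hn
        simp only [hg1, hg2]
        split_ifs <;> first | omega | norm_num
      rw [Finset.sum_congr rfl hc, Finset.sum_const, Nat.card_Ico, nsmul_eq_mul,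
        show 6*d+2 - 3*d = 3*d+2 by omega]
      push_cast; ring
    have B3 : ∑ n ∈ Finset.Ico (6*d+2) (6*d+4), (g1 a n - g2 b n)^2 = 0 := by
      refine Finset.sum_eq_zero fun n hn => ?_
      rw [Finset.mem_Ico] at hn
      simp only [hg1, hg2]
      split_ifs <;> first | omega | norm_num
    have B4 : ∑ n ∈ Finset.Ico (6*d+4) (12*d+1), (g1 a n - g2 b n)^2 = 0 := by
      refine Finset.sum_eq_zero fun n hn => ?_
      rw [Finset.mem_Ico] at hn
      simp only [hg1, hg2]
      split_ifs <;> first | omega | norm_num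
    rw [B1, B2, B3, B4, hdot]
    ring
  have S2 : ∑ j : Fin (12*d+1), (g1 a j.val - vf j.val)^2 = 4*(d:ℝ) + 4 := by
    rw [hsplit (fun n => (g1 a n - vf n)^2)]
    have B1 : ∑ n ∈ Finset.range (3*d), (g1 a n - vf n)^2 = (d : ℝ) := by
      rw [sum_range_three_mul]
      have hterm : ∀ i ∈ Finset.range d,
          ((g1 a (3*i) - vf (3*i))^2 + (g1 a (3*i+1) - vf (3*i+1))^2
            + (g1 a (3*i+2) - vf (3*i+2))^2) = 1 := by
        intro i hi
        rw [Finset.mem_range] at hi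
        rw [e1 a i hi, e2 a i hi, e3 a i hi, w1 i hi, w2 i hi, w3 i hi]
        rcases hAa i with h | h <;> rw [h] <;> norm_num
      rw [Finset.sum_congr rfl hterm, Finset.sum_const, Finset.card_range]
      simp
    have B2 : ∑ n ∈ Finset.Ico (3*d) (6*d+2), (g1 a n - vf n)^2 = 3*(d:ℝ)+2 := by
      have hc : ∀ n ∈ Finset.Ico (3*d) (6*d+2), (g1 a n - vf n)^2 = 1 := by
        intro n hn
        rw [Finset.mem_Ico] at hn
        simp only [hg1, hvf]
        split_ifs <;> first | omega | norm_num
      rw [Finset.sum_congr rfl hc, Finset.sum_const, Nat.card_Ico, nsmul_eq_mul,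
        show 6*d+2 - 3*d = 3*d+2 by omega]
      push_cast; ring
    have B3 : ∑ n ∈ Finset.Ico (6*d+2) (6*d+4), (g1 a n - vf n)^2 = 2 := by
      have hc : ∀ n ∈ Finset.Ico (6*d+2) (6*d+4), (g1 a n - vf n)^2 = 1 := by
        intro n hn
        rw [Finset.mem_Ico] at hn
        simp only [hg1, hvf]
        split_ifs <;> first | omega | norm_num
      rw [Finset.sum_congr rfl hc, Finset.sum_const, Nat.card_Ico, nsmul_eq_mul,
        show 6*d+4 - (6*d+2) = 2 by omega]
      norm_num
    have B4 : ∑ n ∈ Finset.Ico (6*d+4) (12*d+1), (g1 a n - vf n)^2 = 0 := by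
      refine Finset.sum_eq_zero fun n hn => ?_
      rw [Finset.mem_Ico] at hn
      simp only [hg1, hvf]
      split_ifs <;> first | omega | norm_num
    rw [B1, B2, B3, B4]
    ring
  refine ⟨?_, ?_, S1, S2, ?_, ?_⟩
  · intro j
    simp only [hg1]
    split_ifs
    · exact Or.inl rfl
    · exact hAa _
    · exact Or.inl rfl
  · intro j
    simp only [hg2]
    split_ifs
    · rcases hAb (j.val/3) with h | h <;> rw [h] <;> norm_num
    · exact Or.inl rfl
    · exact hAb _
    · exact Or.inr rfl
    · exact Or.inl rfl
  · intro h0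
    rw [S1, h0]
    norm_num
  · intro hne
    have htm : ∀ i, a i * b i = 0 ∨ a i * b i = 1 := by
      intro i
      rcases ha i with h | h <;> rcases hb i with h' | h' <;> rw [h, h'] <;> norm_num
    have hex : ∃ i, a i * b i = 1 := by
      by_contra hc
      push_neg at hc
      exact hne (Finset.sum_eq_zero fun i _ => (htm i).resolve_right (hc i))
    obtain ⟨i, hi⟩ := hex
    have hge : (1:ℝ) ≤ ∑ i, a i * b i := by
      calc (1:ℝ) = a i * b i := hi.symm
        _ ≤ ∑ i, a i * b i := by
          exact Finset.single_le_sum (f := fun k => a k * b k)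
            (fun k _ => by rcases htm k with h | h <;> simp [h])
            (Finset.mem_univ i)
    rw [S1]
    apply Real.sqrt_le_sqrt
    linarith
end

section
/- Let A be a finite set of size m and B a finite set, let 0 <= c0 < c1 be real numbers, and let C : A x B -> R be a cost function such that for every (a, b), either C(a,b) = c0 or C(a,b) >= c1. Let B+ be the disjoint union of B with m auxiliary elements, and extend C by setting C(a, e) = c1 for every a in A and every auxiliary element e. Define m* to be the maximum, over all injections pi : A -> B+, of the number of a in A with pi(a) in B and C(a, pi(a)) = c0. Then the minimum over all injections pi : A -> B+ of sum_{a in A} C(a, pi(a)) equals m* * c0 + (m - m*) * c1. -/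
/-- Two-cost assignment lemma: if every cost is either exactly `c0` or at least `c1 > c0 ≥ 0`,
and `B` is augmented with `m = |A|` auxiliary sinks (the `Fin m` summand) of cost exactly `c1`,
then the minimum total cost over injections `π : A ↪ B ⊕ Fin m` equals
`m* · c0 + (m - m*) · c1`, where `m*` is the maximum number of cost-`c0` edges
in any injection. -/
theorem two_cost_assignment (A B : Type*) [Fintype A] [Fintype B] (m : ℕ)
    (hcard : Fintype.card A = m) (c0 c1 : ℝ) (hc0 : 0 ≤ c0) (hc : c0 < c1)
    (C : A → B → ℝ) (hC : ∀ a b, C a b = c0 ∨ c1 ≤ C a b) :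
    (⨅ π : A ↪ B ⊕ Fin m, ∑ a, Sum.elim (C a) (fun _ => c1) (π a)) =
      ((⨆ π : A ↪ B ⊕ Fin m,
          Nat.card {a : A // ∃ b, π a = Sum.inl b ∧ C a b = c0} : ℕ) : ℝ) * c0 +
        ((m : ℝ) - ((⨆ π : A ↪ B ⊕ Fin m,
          Nat.card {a : A // ∃ b, π a = Sum.inl b ∧ C a b = c0} : ℕ) : ℝ)) * c1 := by
  classical
  set k : (A ↪ B ⊕ Fin m) → ℕ :=
    fun π => Nat.card {a : A // ∃ b, π a = Sum.inl b ∧ C a b = c0} with hkdef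
  set cost : (A ↪ B ⊕ Fin m) → ℝ :=
    fun π => ∑ a, Sum.elim (C a) (fun _ => c1) (π a) with hcostdef
  have e : A ≃ Fin m := Fintype.equivFinOfCardEq hcard
  have hne : Nonempty (A ↪ B ⊕ Fin m) :=
    ⟨⟨fun a => Sum.inr (e a), fun a a' h => e.injective (Sum.inr.inj h)⟩⟩
  have hkcard : ∀ π : A ↪ B ⊕ Fin m,
      k π = (Finset.univ.filter (fun a => ∃ b, π a = Sum.inl b ∧ C a b = c0)).card := by
    intro π
    simp [hkdef, Nat.card_eq_fintype_card, Fintype.card_subtype]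
  have hkle : ∀ π, k π ≤ m := by
    intro π
    rw [hkcard π]
    calc (Finset.univ.filter (fun a => ∃ b, π a = Sum.inl b ∧ C a b = c0)).card
        ≤ Finset.univ.card := Finset.card_filter_le _ _
      _ = m := by simp [hcard]
  obtain ⟨π₀, hπ₀⟩ := Finite.exists_max k
  have hM : (⨆ π, k π) = k π₀ :=
    le_antisymm (ciSup_le hπ₀) (le_ciSup (Finite.bddAbove_range k) π₀)
  -- lower bound on cost of any injection
  have hlow : ∀ π, (k π : ℝ) * c0 + ((m : ℝ) - (k π : ℝ)) * c1 ≤ cost π := by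
    intro π
    set P : A → Prop := fun a => ∃ b, π a = Sum.inl b ∧ C a b = c0 with hP
    have hsplit := Finset.sum_filter_add_sum_filter_not Finset.univ P
      (fun a => Sum.elim (C a) (fun _ => c1) (π a))
    have hcards : (Finset.univ.filter P).card
        + (Finset.univ.filter (fun a => ¬ P a)).card = m := by
      rw [Finset.card_filter_add_card_filter_not]
      simp [hcard]
    have h1 : ∑ a ∈ Finset.univ.filter P, Sum.elim (C a) (fun _ => c1) (π a)
        = (k π : ℝ) * c0 := by
      rw [Finset.sum_congr rfl (g := fun _ => c0) (fun a ha => ?_),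
        Finset.sum_const, nsmul_eq_mul, hkcard π]
      obtain ⟨b, hb, hcb⟩ := (Finset.mem_filter.mp ha).2
      rw [hb]
      simpa using hcb
    have h2 : ((m : ℝ) - (k π : ℝ)) * c1 ≤
        ∑ a ∈ Finset.univ.filter (fun a => ¬ P a),
          Sum.elim (C a) (fun _ => c1) (π a) := by
      have hcardeq : ((m : ℝ) - (k π : ℝ)) =
          ((Finset.univ.filter (fun a => ¬ P a)).card : ℝ) := by
        have := hcards
        rw [← hkcard π] at this
        have : (k π : ℝ) + ((Finset.univ.filter (fun a => ¬ P a)).card : ℝ) = m := by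
          exact_mod_cast congrArg (Nat.cast : ℕ → ℝ) this
        linarith
      rw [hcardeq]
      calc ((Finset.univ.filter (fun a => ¬ P a)).card : ℝ) * c1
          = ∑ _a ∈ Finset.univ.filter (fun a => ¬ P a), c1 := by
            rw [Finset.sum_const, nsmul_eq_mul]
        _ ≤ _ := by
            refine Finset.sum_le_sum (fun a ha => ?_)
            have hnp := (Finset.mem_filter.mp ha).2
            cases h : π a with
            | inl b =>
                have : ¬ C a b = c0 := fun hcb => hnp ⟨b, h, hcb⟩
                have := (hC a b).resolve_left this
                simpa [h] using this
            | inr j => simp [h]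
    have : cost π = _ + _ := hsplit.symm
    rw [hcostdef]
    simp only
    rw [← hsplit, h1]
    linarith
  -- the value
  refine le_antisymm ?_ ?_
  · -- iInf ≤ V : construct an optimal injection
    set P₀ : A → Prop := fun a => ∃ b, π₀ a = Sum.inl b ∧ C a b = c0 with hP₀
    have hσinj : Function.Injective
        (fun a => if P₀ a then π₀ a else Sum.inr (e a) : A → B ⊕ Fin m) := by
      intro a a' h
      by_cases ha : P₀ a <;> by_cases ha' : P₀ a' <;> simp only [ha, ha', if_pos, if_neg,
        if_true, if_false] at h
      · exact π₀.injective h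
      · obtain ⟨b, hb, -⟩ := ha; rw [hb] at h; exact absurd h (by simp)
      · obtain ⟨b, hb, -⟩ := ha'; rw [hb] at h; exact absurd h (by simp)
      · exact e.injective (Sum.inr.inj h)
    set σ : A ↪ B ⊕ Fin m := ⟨_, hσinj⟩ with hσ
    have hcostσ : cost σ = (k π₀ : ℝ) * c0 + ((m : ℝ) - (k π₀ : ℝ)) * c1 := by
      have hcards : (Finset.univ.filter P₀).card
          + (Finset.univ.filter (fun a => ¬ P₀ a)).card = m := by
        rw [Finset.card_filter_add_card_filter_not]
        simp [hcard]
      have hcardeq : ((m : ℝ) - (k π₀ : ℝ)) =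
          ((Finset.univ.filter (fun a => ¬ P₀ a)).card : ℝ) := by
        rw [← hkcard π₀] at hcards
        have : (k π₀ : ℝ) + ((Finset.univ.filter (fun a => ¬ P₀ a)).card : ℝ) = m := by
          exact_mod_cast congrArg (Nat.cast : ℕ → ℝ) hcards
        linarith
      have hsplit := Finset.sum_filter_add_sum_filter_not Finset.univ P₀
        (fun a => Sum.elim (C a) (fun _ => c1) (σ a))
      have h1 : ∑ a ∈ Finset.univ.filter P₀, Sum.elim (C a) (fun _ => c1) (σ a)
          = (k π₀ : ℝ) * c0 := by
        rw [Finset.sum_congr rfl (g := fun _ => c0) (fun a ha => ?_),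
          Finset.sum_const, nsmul_eq_mul, hkcard π₀]
        obtain ⟨b, hb, hcb⟩ := (Finset.mem_filter.mp ha).2
        have hpa : P₀ a := ⟨b, hb, hcb⟩
        have : σ a = Sum.inl b := by simp [hσ, hpa, hb]
        rw [this]
        simpa using hcb
      have h2 : ∑ a ∈ Finset.univ.filter (fun a => ¬ P₀ a),
          Sum.elim (C a) (fun _ => c1) (σ a)
          = ((Finset.univ.filter (fun a => ¬ P₀ a)).card : ℝ) * c1 := by
        rw [Finset.sum_congr rfl (g := fun _ => c1) (fun a ha => ?_),
          Finset.sum_const, nsmul_eq_mul]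
        have hnp := (Finset.mem_filter.mp ha).2
        have : σ a = Sum.inr (e a) := by simp [hσ, hnp]
        rw [this]
        simp
      rw [hcostdef]
      simp only
      rw [← hsplit, h1, h2, hcardeq]
    calc (⨅ π : A ↪ B ⊕ Fin m, cost π) ≤ cost σ :=
          ciInf_le (Finite.bddBelow_range cost) σ
      _ = ((⨆ π, k π : ℕ) : ℝ) * c0 + ((m : ℝ) - ((⨆ π, k π : ℕ) : ℝ)) * c1 := by
          rw [hcostσ, hM]
  · refine le_ciInf (fun π => ?_)
    have h1 := hlow π
    have h2 : (k π : ℝ) ≤ ((⨆ π, k π : ℕ) : ℝ) := by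
      exact_mod_cast le_ciSup (Finite.bddAbove_range k) π
    have h3 : ((⨆ π, k π : ℕ) : ℝ) ≤ (m : ℝ) := by
      rw [hM]; exact_mod_cast hkle π₀
    nlinarith [h1, h2, h3, hc.le]
end

section
/- Let d >= 1, let m <= n be natural numbers, and let a : Fin m -> {0,1}^d and b : Fin n -> {0,1}^d be families of 0/1 vectors. Suppose Phi1, Phi2 : {0,1}^d -> {0,1}^(12d+1) and v in {0,1}^(12d+1) satisfy ||Phi1(x) - Phi2(y)||^2 = 2*(x . y) + 4d + 2 and ||Phi1(x) - v||^2 = 4d + 4 for all x, y in {0,1}^d. Define B'' : Fin (n+m) -> {0,1}^(12d+1) by B''_j = Phi2(b_j) for j < n and B''_j = v for n <= j < n+m. Define m* as the maximum, over all injections pi : Fin m -> Fin (n+m), of the number of indices i with pi(i) < n and a_i . b_{pi(i)} = 0. Then the minimum over all injections pi : Fin m -> Fin (n+m) of sum_{i < m} ||Phi1(a_i) - B''_{pi(i)}||_2 equals m* * sqrt(4d+2) + (m - m*) * sqrt(4d+4). -/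
/-!
A pair `(a i, B''_j)` costs `√(4d+2)` when `j < n` and `a i ⬝ b j = 0`, and at least `√(4d+4)`
otherwise: a nonzero dot product of `0/1` vectors is at least `1`, and each copy of `v` costs
exactly `√(4d+4)`. Hence an assignment with `k` orthogonal pairs costs at least
`k √(4d+2) + (m - k) √(4d+4)`, which decreases in `k`, and a maximum orthogonal matching whose
unmatched points are sent to the copies of `v` attains this bound with `k = m*`.
-/

open Finset

section TwoLevelSum

variable {ι : Type*} [Fintype ι] {p : ι → Prop} {K L : ℝ}

theorem sum_ite_eq_card_mul_add (p : ι → Prop) [DecidablePred p] (K L : ℝ) :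
    ∑ i, (if p i then K else L) =
      Nat.card {i // p i} * K + (Fintype.card ι - Nat.card {i // p i}) * L := by
  rw [Finset.sum_ite, sum_const, sum_const, nsmul_eq_mul, nsmul_eq_mul,
    Nat.card_eq_fintype_card, Fintype.card_subtype, ← card_univ,
    ← card_filter_add_card_filter_not (s := univ) p]
  push_cast
  ring

theorem card_mul_add_le_sum {f : ι → ℝ} (hp : ∀ i, p i → f i = K) (hnp : ∀ i, ¬p i → L ≤ f i) :
    Nat.card {i // p i} * K + (Fintype.card ι - Nat.card {i // p i}) * L ≤ ∑ i, f i := by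
  classical
  rw [← sum_ite_eq_card_mul_add]
  refine sum_le_sum fun i _ => ?_
  split_ifs with h
  · exact (hp i h).ge
  · exact hnp i h

theorem sum_eq_card_mul_add {f : ι → ℝ} (hp : ∀ i, p i → f i = K) (hnp : ∀ i, ¬p i → f i = L) :
    ∑ i, f i = Nat.card {i // p i} * K + (Fintype.card ι - Nat.card {i // p i}) * L := by
  classical
  rw [← sum_ite_eq_card_mul_add]
  refine sum_congr rfl fun i _ => ?_
  split_ifs with h
  · exact hp i h
  · exact hnp i h

end TwoLevelSum

theorem iInf_sum_eq_of_two_level_cost {ι β : Type*} [Fintype ι] [Finite β]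
    (G : ι → β → Prop) (c : ι → β → ℝ) (e : ι ↪ β) {K L : ℝ} (hKL : K ≤ L)
    (hG : ∀ i j, G i j → c i j = K) (hnG : ∀ i j, ¬G i j → L ≤ c i j)
    (hce : ∀ i i', c i (e i') = L) (hGe : ∀ i i', ¬G i (e i')) :
    ⨅ π : ι ↪ β, ∑ i, c i (π i) =
      (⨆ π : ι ↪ β, Nat.card {i // G i (π i)} : ℕ) * K +
        (Fintype.card ι - (⨆ π : ι ↪ β, Nat.card {i // G i (π i)} : ℕ)) * L := by
  classical
  have : Nonempty (ι ↪ β) := ⟨e⟩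
  set N : (ι ↪ β) → ℕ := fun π => Nat.card {i // G i (π i)}
  obtain ⟨π₀, hπ₀⟩ := exists_eq_ciSup_of_finite (f := N)
  rw [← hπ₀]
  refine IsGLB.ciInf_eq <| IsLeast.isGLB ⟨?_, ?_⟩
  · -- keep the `G`-pairs of a maximising `π₀` and reroute every other `i` to its slot `e i`
    let π : ι ↪ β :=
      ⟨fun i => if G i (π₀ i) then π₀ i else e i, fun i i' h => by
        dsimp only at h
        split_ifs at h with hi hi' hi'
        · exact π₀.injective h
        · exact absurd (h ▸ hi) (hGe i i')
        · exact absurd (h ▸ hi') (hGe i' i)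
        · exact e.injective h⟩
    refine ⟨π, sum_eq_card_mul_add (p := fun i => G i (π₀ i)) (fun i hi => ?_) (fun i hi => ?_)⟩
    · change c i (if _ then _ else _) = K
      rw [if_pos hi, hG i _ hi]
    · change c i (if _ then _ else _) = L
      rw [if_neg hi, hce]
  · rintro _ ⟨π, rfl⟩
    have hle : N π ≤ N π₀ := hπ₀ ▸ le_ciSup (Set.finite_range N).bddAbove π
    refine le_trans ?_ (card_mul_add_le_sum (fun i => hG i (π i)) (fun i => hnG i (π i)))
    have : (N π : ℝ) ≤ N π₀ := by exact_mod_cast hle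
    nlinarith

theorem one_le_sum_mul_of_ne_zero {α : Type*} [Fintype α] {x y : α → ℝ}
    (hx : ∀ t, x t = 0 ∨ x t = 1) (hy : ∀ t, y t = 0 ∨ y t = 1) (h : ∑ t, x t * y t ≠ 0) :
    1 ≤ ∑ t, x t * y t := by
  have h01 : ∀ t, x t * y t = 0 ∨ x t * y t = 1 := fun t => by
    rcases hx t with h | h <;> rcases hy t with h' | h' <;> simp [h, h']
  obtain ⟨t, -, ht⟩ := exists_ne_zero_of_sum_ne_zero h
  calc (1 : ℝ) = x t * y t := ((h01 t).resolve_left ht).symm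
    _ ≤ ∑ t, x t * y t :=
      single_le_sum (f := fun t => x t * y t)
        (fun s _ => by rcases h01 s with h | h <;> simp [h]) (mem_univ t)

theorem asymmetric_emd_of_mom_instance_general (d m n : ℕ)
    (a : Fin m → Fin d → ℝ) (b : Fin n → Fin d → ℝ)
    (ha : ∀ i t, a i t = 0 ∨ a i t = 1)
    (hb : ∀ j t, b j t = 0 ∨ b j t = 1)
    (Φ₁ Φ₂ : (Fin d → ℝ) → (Fin (12 * d + 1) → ℝ)) (v : Fin (12 * d + 1) → ℝ)
    (hΦ : ∀ x y : Fin d → ℝ,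
        (∀ i, x i = 0 ∨ x i = 1) → (∀ i, y i = 0 ∨ y i = 1) →
          ∑ j, (Φ₁ x j - Φ₂ y j) ^ 2 = 2 * (∑ i, x i * y i) + 4 * d + 2)
    (hv : ∀ x : Fin d → ℝ, (∀ i, x i = 0 ∨ x i = 1) →
        ∑ j, (Φ₁ x j - v j) ^ 2 = 4 * d + 4) :
    (⨅ π : Fin m ↪ Fin (n + m),
        ∑ i, Real.sqrt (∑ j,
          (Φ₁ (a i) j -
            (if h : ((π i : Fin (n + m)) : ℕ) < n then Φ₂ (b ⟨π i, h⟩) j else v j)) ^ 2)) =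
      ((⨆ π : Fin m ↪ Fin (n + m),
          Nat.card {i : Fin m //
            ∃ h : ((π i : Fin (n + m)) : ℕ) < n, ∑ t, a i t * b ⟨π i, h⟩ t = 0} : ℕ) : ℝ)
          * Real.sqrt (4 * d + 2) +
        ((m : ℝ) - ((⨆ π : Fin m ↪ Fin (n + m),
          Nat.card {i : Fin m //
            ∃ h : ((π i : Fin (n + m)) : ℕ) < n, ∑ t, a i t * b ⟨π i, h⟩ t = 0} : ℕ) : ℝ))
          * Real.sqrt (4 * d + 4) := by
  have hKL : √(4 * (d : ℝ) + 2) ≤ √(4 * d + 4) := Real.sqrt_le_sqrt (by linarith)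
  refine (iInf_sum_eq_of_two_level_cost
    (fun i (j : Fin (n + m)) => ∃ h : (j : ℕ) < n, ∑ t, a i t * b ⟨j, h⟩ t = 0)
    (fun i (j : Fin (n + m)) =>
      √(∑ k, (Φ₁ (a i) k - if h : (j : ℕ) < n then Φ₂ (b ⟨j, h⟩) k else v k) ^ 2))
    (Fin.natAddEmb n) hKL ?_ ?_ ?_ ?_).trans (by rw [Fintype.card_fin])
  · rintro i j ⟨hj, hdot⟩
    simp only [dif_pos hj, hΦ _ _ (ha i) (hb _), hdot]
    ring_nf
  · intro i j hnot
    by_cases hj : (j : ℕ) < n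
    · simp only [dif_pos hj, hΦ _ _ (ha i) (hb _)]
      have := one_le_sum_mul_of_ne_zero (ha i) (hb _) fun h => hnot ⟨hj, h⟩
      exact Real.sqrt_le_sqrt (by linarith)
    · simp only [dif_neg hj, hv _ (ha i), le_refl]
  · intro i i'
    simp [hv _ (ha i)]
  · simp

/-- Reduction from Maximum Orthogonal Matching to asymmetric EMD: given gadget maps
`Φ₁, Φ₂ : {0,1}^d → {0,1}^{12d+1}` and an auxiliary vector `v` with
`‖Φ₁(x) - Φ₂(y)‖² = 2(x⬝y) + 4d + 2` and `‖Φ₁(x) - v‖² = 4d + 4`, form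
`B'' : Fin (n+m)` consisting of `Φ₂(b_j)` for `j < n` followed by `m` copies of `v`.
Then the asymmetric EMD (minimum over injections `π : Fin m ↪ Fin (n+m)` of
`∑ i, ‖Φ₁(a_i) - B''_{π i}‖₂`) equals `m* √(4d+2) + (m - m*) √(4d+4)`, where `m*` is the
maximum size of an orthogonal matching between the families `a` and `b`. -/
theorem asymmetric_emd_of_mom_instance (d m n : ℕ) (hd : 1 ≤ d) (hmn : m ≤ n)
    (a : Fin m → Fin d → ℝ) (b : Fin n → Fin d → ℝ)
    (ha : ∀ i t, a i t = 0 ∨ a i t = 1)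
    (hb : ∀ j t, b j t = 0 ∨ b j t = 1)
    (Φ₁ Φ₂ : (Fin d → ℝ) → (Fin (12 * d + 1) → ℝ)) (v : Fin (12 * d + 1) → ℝ)
    (hΦ : ∀ x y : Fin d → ℝ,
        (∀ i, x i = 0 ∨ x i = 1) → (∀ i, y i = 0 ∨ y i = 1) →
          ∑ j, (Φ₁ x j - Φ₂ y j) ^ 2 = 2 * (∑ i, x i * y i) + 4 * d + 2)
    (hv : ∀ x : Fin d → ℝ, (∀ i, x i = 0 ∨ x i = 1) →
        ∑ j, (Φ₁ x j - v j) ^ 2 = 4 * d + 4) :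
    (⨅ π : Fin m ↪ Fin (n + m),
        ∑ i, Real.sqrt (∑ j,
          (Φ₁ (a i) j -
            (if h : ((π i : Fin (n + m)) : ℕ) < n then Φ₂ (b ⟨π i, h⟩) j else v j)) ^ 2)) =
      ((⨆ π : Fin m ↪ Fin (n + m),
          Nat.card {i : Fin m //
            ∃ h : ((π i : Fin (n + m)) : ℕ) < n, ∑ t, a i t * b ⟨π i, h⟩ t = 0} : ℕ) : ℝ)
          * Real.sqrt (4 * d + 2) +
        ((m : ℝ) - ((⨆ π : Fin m ↪ Fin (n + m),
          Nat.card {i : Fin m //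
            ∃ h : ((π i : Fin (n + m)) : ℕ) < n, ∑ t, a i t * b ⟨π i, h⟩ t = 0} : ℕ) : ℝ))
          * Real.sqrt (4 * d + 4) :=
  asymmetric_emd_of_mom_instance_general d m n a b ha hb Φ₁ Φ₂ v hΦ hv
end

section
/- Let n >= 2, k >= 1, c >= 1 and 1 <= d <= n be natural numbers, and set N = n^(16k). Let a, b : Fin n -> Z^d be families of integer vectors all of whose entries lie in {1, ..., n^k}, such that ||a_i||^2 is odd for every i and ||b_j||^2 is odd for every j. Suppose adjA : Fin n -> Z^(c+1) and adjB : Fin n -> Z^(c+1) satisfy: (adjA i)_0 = (||a_i||^2 + 1)/2 and ||adjA i||^2 = n^(4k) * d^2 for every i, and (adjB j)_0 = (||b_j||^2 + 1)/2 and ||adjB j||^2 = n^(4k) * d^2 for every j. In R^(2d+2c+2), with coordinates grouped into blocks of sizes d, c+1, c+1, d, define: u = (0^d, (1,0^c), 0^(c+1), 0^d); v = (N^d, 0^(c+1), (1,0^c), 0^d); a'_i = (0^d, adjA i, 0^(c+1), a_i); b'_j = (N^d, 0^(c+1), adjB j, b_j). Let P_1, ..., P_{2n-1} consist of a'_1,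 ..., a'_n followed by n-1 copies of v, and Q_1, ..., Q_{2n-1} consist of b'_1, ..., b'_n followed by n-1 copies of u. Then the minimum over all permutations sigma of {1, ..., 2n-1} of sum_i ||P_i - Q_{sigma(i)}||^2 (squared Euclidean distances) equals 2*(n-1)*n^(4k)*d^2 + N^2*d + 2*n^(4k)*d^2 + min_{i,j} ||a_i - b_j||^2. -/
namespace EMDReduction

def tau (α : Type*) : (Option α ⊕ α) ≃ (Option α ⊕ α) where
  toFun x := match x with
    | Sum.inl none => Sum.inl none
    | Sum.inl (some r) => Sum.inr r
    | Sum.inr r => Sum.inl (some r)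
  invFun x := match x with
    | Sum.inl none => Sum.inl none
    | Sum.inl (some r) => Sum.inr r
    | Sum.inr r => Sum.inl (some r)
  left_inv := by rintro ((_|_)|_) <;> rfl
  right_inv := by rintro ((_|_)|_) <;> rfl

def eqv (n : ℕ) (hn : n - 1 + 1 = n) (p : Fin n) : Fin n ≃ Option (Fin (n - 1)) :=
  (finCongr hn.symm).trans (finSuccEquiv' (Fin.cast hn.symm p))

lemma eqv_self (n : ℕ) (hn : n - 1 + 1 = n) (p : Fin n) : eqv n hn p p = none := by
  simp only [eqv, Equiv.trans_apply, finCongr_apply]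
  exact finSuccEquiv'_at _

lemma eqv_symm_none (n : ℕ) (hn : n - 1 + 1 = n) (p : Fin n) :
    (eqv n hn p).symm none = p := by
  simp only [eqv, Equiv.symm_trans_apply, finSuccEquiv'_symm_none, finCongr_symm,
    finCongr_apply]
  ext; simp

def sigmaStar (n : ℕ) (hn : n - 1 + 1 = n) (i0 j0 : Fin n) :
    Equiv.Perm (Fin n ⊕ Fin (n - 1)) :=
  (Equiv.sumCongr (eqv n hn i0) (Equiv.refl _)).trans
    ((tau (Fin (n - 1))).trans (Equiv.sumCongr (eqv n hn j0) (Equiv.refl _)).symm)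

lemma sigmaStar_inl_self (n : ℕ) (hn : n - 1 + 1 = n) (i0 j0 : Fin n) :
    sigmaStar n hn i0 j0 (Sum.inl i0) = Sum.inl j0 := by
  simp [sigmaStar, eqv_self, tau, eqv_symm_none]

lemma sigmaStar_inl_ne (n : ℕ) (hn : n - 1 + 1 = n) (i0 j0 i : Fin n) (h : i ≠ i0) :
    ∃ r, sigmaStar n hn i0 j0 (Sum.inl i) = Sum.inr r := by
  cases heq : eqv n hn i0 i with
  | none =>
    exact absurd ((eqv n hn i0).injective (heq.trans (eqv_self n hn i0).symm)) h
  | some r => exact ⟨r, by simp [sigmaStar, heq, tau]⟩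

lemma sigmaStar_inr (n : ℕ) (hn : n - 1 + 1 = n) (i0 j0 : Fin n) (r : Fin (n - 1)) :
    ∃ j, sigmaStar n hn i0 j0 (Sum.inr r) = Sum.inl j := by
  exact ⟨(eqv n hn j0).symm (some r), by simp [sigmaStar, tau]⟩

/-- The "reduced" cost matrix. -/
def costT (n d : ℕ) (NR : ℝ) (K : Fin n → Fin n → ℝ) :
    Fin n ⊕ Fin (n - 1) → Fin n ⊕ Fin (n - 1) → ℝ :=
  Sum.elim (fun i => Sum.elim (fun j => NR ^ 2 * d + K i j) fun _ => 0)
    (fun _ => Sum.elim (fun _ => 0) fun _ => NR ^ 2 * d + 2)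

/-- Indicator of the `inl` part, weighted by `A`. -/
def indl (n : ℕ) (A : ℝ) : Fin n ⊕ Fin (n - 1) → ℝ := Sum.elim (fun _ => A) (fun _ => 0)

/-- The minimum over bijections of the sum of *squared* Euclidean distances (SQEMD)
between the families `P` and `Q` constructed from a bichromatic-closest-pair instance equals
`2(n-1) n^{4k} d² + N² d + 2 n^{4k} d² + min_{i,j} ‖a_i - b_j‖²` where `N = n^{16k}`. -/
theorem sqemd_of_closest_pair_instance (n k c d : ℕ)
    (hn : 2 ≤ n) (hk : 1 ≤ k) (hc : 1 ≤ c) (hd : 1 ≤ d) (hdn : d ≤ n)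
    (a b : Fin n → Fin d → ℤ)
    (ha : ∀ i t, 1 ≤ a i t ∧ a i t ≤ (n : ℤ) ^ k)
    (hb : ∀ j t, 1 ≤ b j t ∧ b j t ≤ (n : ℤ) ^ k)
    (hoddA : ∀ i, Odd (∑ t, (a i t) ^ 2))
    (hoddB : ∀ j, Odd (∑ t, (b j t) ^ 2))
    (adjA adjB : Fin n → Fin (c + 1) → ℤ)
    (hadjA0 : ∀ i, adjA i 0 = ((∑ t, (a i t) ^ 2) + 1) / 2)
    (hadjA : ∀ i, ∑ j, (adjA i j) ^ 2 = (n : ℤ) ^ (4 * k) * (d : ℤ) ^ 2)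
    (hadjB0 : ∀ j, adjB j 0 = ((∑ t, (b j t) ^ 2) + 1) / 2)
    (hadjB : ∀ j, ∑ i, (adjB j i) ^ 2 = (n : ℤ) ^ (4 * k) * (d : ℤ) ^ 2) :
    (⨅ σ : Equiv.Perm (Fin n ⊕ Fin (n - 1)),
        ∑ x, ∑ coord,
          (P n d c ((n : ℝ) ^ (16 * k)) adjA a x coord
            - Q n d c ((n : ℝ) ^ (16 * k)) adjB b (σ x) coord) ^ 2) =
      2 * ((n : ℝ) - 1) * (n : ℝ) ^ (4 * k) * (d : ℝ) ^ 2 +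
        (((n : ℝ) ^ (16 * k)) ^ 2 * (d : ℝ)
          + 2 * (n : ℝ) ^ (4 * k) * (d : ℝ) ^ 2
          + ⨅ i : Fin n, ⨅ j : Fin n, ∑ t, ((a i t : ℝ) - (b j t : ℝ)) ^ 2) := by
  have hn1 : n - 1 + 1 = n := by omega
  have hn0 : (0 : ℕ) < n := by omega
  have : Nonempty (Fin n) := ⟨⟨0, hn0⟩⟩
  set NR : ℝ := (n : ℝ) ^ (16 * k) with hNRdef
  set A : ℝ := (n : ℝ) ^ (4 * k) * (d : ℝ) ^ 2 with hAdef
  set K : Fin n → Fin n → ℝ := fun i j => ∑ t, ((a i t : ℝ) - (b j t : ℝ)) ^ 2 with hKdef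
  -- the minimum of K
  obtain ⟨⟨i0, j0⟩, hp0⟩ := Finite.exists_min (fun p : Fin n × Fin n => K p.1 p.2)
  have hKnonneg : ∀ i j, 0 ≤ K i j := fun i j => Finset.sum_nonneg fun t _ => sq_nonneg _
  have hbddn : ∀ (f : Fin n → ℝ), BddBelow (Set.range f) := fun f => (Set.finite_range f).bddBelow
  have hDle : ∀ i j, (⨅ i, ⨅ j, K i j) ≤ K i j := fun i j =>
    le_trans (ciInf_le (hbddn _) i) (ciInf_le (hbddn _) j)
  have hDeq : (⨅ i, ⨅ j, K i j) = K i0 j0 :=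
    le_antisymm (hDle i0 j0) (le_ciInf fun i => le_ciInf fun j => hp0 (i, j))
  -- integer facts cast to ℝ
  have hA2 : ∀ i, (∑ j, ((adjA i j : ℝ)) ^ 2) = A := by
    intro i
    have h := congrArg (fun z : ℤ => (z : ℝ)) (hadjA i)
    push_cast at h
    simpa [hAdef] using h
  have hB2 : ∀ j, (∑ i, ((adjB j i : ℝ)) ^ 2) = A := by
    intro j
    have h := congrArg (fun z : ℤ => (z : ℝ)) (hadjB j)
    push_cast at h
    simpa [hAdef] using h
  have h2A : ∀ i, (2 : ℝ) * (adjA i 0 : ℝ) = (∑ t, ((a i t : ℝ)) ^ 2) + 1 := by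
    intro i
    have h2 : 2 * adjA i 0 = (∑ t, (a i t) ^ 2) + 1 := by
      have h0 := hadjA0 i
      obtain ⟨m, hm⟩ := hoddA i
      omega
    have h := congrArg (fun z : ℤ => (z : ℝ)) h2
    push_cast at h
    convert h using 2
  have h2B : ∀ j, (2 : ℝ) * (adjB j 0 : ℝ) = (∑ t, ((b j t : ℝ)) ^ 2) + 1 := by
    intro j
    have h2 : 2 * adjB j 0 = (∑ t, (b j t) ^ 2) + 1 := by
      have h0 := hadjB0 j
      obtain ⟨m, hm⟩ := hoddB j
      omega
    have h := congrArg (fun z : ℤ => (z : ℝ)) h2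
    push_cast at h
    convert h using 2
  -- delta sums
  have hdsum : ∀ (w : Fin (c + 1) → ℝ),
      ∑ j, (w j - if j = 0 then 1 else 0) ^ 2 = (∑ j, (w j) ^ 2) - 2 * w 0 + 1 := by
    intro w
    have hterm : ∀ j : Fin (c + 1),
        (w j - if j = 0 then 1 else 0) ^ 2 = (w j) ^ 2 + (if j = 0 then 1 - 2 * w j else 0) := by
      intro j; split <;> ring
    rw [Finset.sum_congr rfl fun j _ => hterm j, Finset.sum_add_distrib, Finset.sum_ite_eq']
    simp; ring
  have hdsum' : ∀ (w : Fin (c + 1) → ℝ),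
      ∑ j, ((if j = 0 then 1 else 0) - w j) ^ 2 = (∑ j, (w j) ^ 2) - 2 * w 0 + 1 := by
    intro w
    rw [← hdsum w]
    exact Finset.sum_congr rfl fun j _ => by ring
  have hcard : ∀ (r : ℝ), (∑ _t : Fin d, r) = d * r := by
    intro r
    simp [Finset.sum_const, mul_comm]
  -- the cost matrix
  have hM : ∀ x y, (∑ coord, (P n d c NR adjA a x coord - Q n d c NR adjB b y coord) ^ 2)
      = indl n A x + indl n A y + costT n d NR K x y := by
    rintro (i | r) (j | s)
    · simp only [P, Q, Sum.elim_inl, aPoint, bPoint, Fintype.sum_sum_type, Sum.elim_inr,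
        indl, costT]
      rw [hcard ((0 - NR) ^ 2)]
      simp only [sub_zero, zero_sub, neg_sq]
      rw [hA2 i, hB2 j]
      have hKij : (∑ t, ((a i t : ℝ) - (b j t : ℝ)) ^ 2) = K i j := rfl
      rw [hKij]
      ring
    · simp only [P, Q, Sum.elim_inl, Sum.elim_inr, aPoint, u, Fintype.sum_sum_type,
        indl, costT]
      rw [hdsum, hA2 i]
      simp only [sub_self, sub_zero, ne_eq, OfNat.ofNat_ne_zero, not_false_eq_true,
        zero_pow, Finset.sum_const_zero]
      linarith [h2A i]
    · simp only [P, Q, Sum.elim_inl, Sum.elim_inr, bPoint, v, Fintype.sum_sum_type,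
        indl, costT]
      rw [hdsum', hB2 j]
      simp only [sub_self, zero_sub, neg_sq, ne_eq, OfNat.ofNat_ne_zero, not_false_eq_true,
        zero_pow, Finset.sum_const_zero]
      linarith [h2B j]
    · simp only [P, Q, Sum.elim_inl, Sum.elim_inr, u, v, Fintype.sum_sum_type, indl, costT]
      rw [hdsum fun _ => (0 : ℝ), hdsum' fun _ => (0 : ℝ), hcard ((NR - 0) ^ 2)]
      simp only [sub_self, sub_zero, ne_eq, OfNat.ofNat_ne_zero, not_false_eq_true,
        zero_pow, Finset.sum_const_zero]
      ring
  have hindl : (∑ x, indl n A x) = (n : ℝ) * A := by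
    simp [indl, Fintype.sum_sum_type, Finset.sum_const, mul_comm]
  have hcost : ∀ σ : Equiv.Perm (Fin n ⊕ Fin (n - 1)),
      (∑ x, ∑ coord, (P n d c NR adjA a x coord - Q n d c NR adjB b (σ x) coord) ^ 2)
        = 2 * ((n : ℝ) * A) + ∑ x, costT n d NR K x (σ x) := by
    intro σ
    rw [Finset.sum_congr rfl fun x _ => hM x (σ x)]
    rw [Finset.sum_add_distrib, Finset.sum_add_distrib]
    rw [Equiv.sum_comp σ (indl n A), hindl]
    ring
  have hTnonneg : ∀ x y, 0 ≤ costT n d NR K x y := by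
    rintro (i | r) (j | s) <;> simp only [costT, Sum.elim_inl, Sum.elim_inr, le_refl]
    · exact add_nonneg (by positivity) (hKnonneg i j)
    · positivity
  -- lower bound
  have hlow : ∀ σ : Equiv.Perm (Fin n ⊕ Fin (n - 1)),
      2 * ((n : ℝ) - 1) * (n : ℝ) ^ (4 * k) * (d : ℝ) ^ 2 +
        (NR ^ 2 * (d : ℝ) + 2 * (n : ℝ) ^ (4 * k) * (d : ℝ) ^ 2 + K i0 j0) ≤
      ∑ x, ∑ coord, (P n d c NR adjA a x coord - Q n d c NR adjB b (σ x) coord) ^ 2 := by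
    intro σ
    rw [hcost σ]
    obtain ⟨i1, j1, hσ1⟩ : ∃ i1 j1, σ (Sum.inl i1) = Sum.inl j1 := by
      by_contra hcon
      push_neg at hcon
      have hg : ∀ i : Fin n, ∃ r, σ (Sum.inl i) = Sum.inr r := by
        intro i
        cases hσ : σ (Sum.inl i) with
        | inl j => exact absurd hσ (hcon i j)
        | inr r => exact ⟨r, rfl⟩
      choose g hg' using hg
      have ginj : Function.Injective g := by
        intro i i' hgii
        have : σ (Sum.inl i) = σ (Sum.inl i') := by rw [hg' i, hg' i', hgii]
        exact Sum.inl.inj (σ.injective this)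
      have hle := Fintype.card_le_of_injective g ginj
      simp only [Fintype.card_fin] at hle
      omega
    have hsingle : costT n d NR K (Sum.inl i1) (σ (Sum.inl i1)) ≤
        ∑ x, costT n d NR K x (σ x) :=
      Finset.single_le_sum (fun x _ => hTnonneg x (σ x)) (Finset.mem_univ _)
    rw [hσ1, show costT n d NR K (Sum.inl i1) (Sum.inl j1) = NR ^ 2 * (d : ℝ) + K i1 j1
      from rfl] at hsingle
    have hK01 : K i0 j0 ≤ K i1 j1 := hp0 (i1, j1)
    have key : 2 * ((n : ℝ) - 1) * (n : ℝ) ^ (4 * k) * (d : ℝ) ^ 2 +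
        (NR ^ 2 * (d : ℝ) + 2 * (n : ℝ) ^ (4 * k) * (d : ℝ) ^ 2 + K i0 j0)
        = 2 * ((n : ℝ) * A) + (NR ^ 2 * (d : ℝ) + K i0 j0) := by
      rw [hAdef]; ring
    linarith [hsingle, hK01, key]
  -- upper bound witness
  have hTsum : ∑ x, costT n d NR K x (sigmaStar n hn1 i0 j0 x) = NR ^ 2 * d + K i0 j0 := by
    rw [Fintype.sum_sum_type]
    have h2' : (∑ r : Fin (n - 1), costT n d NR K (Sum.inr r)
        (sigmaStar n hn1 i0 j0 (Sum.inr r))) = 0 := by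
      refine Finset.sum_eq_zero fun r _ => ?_
      obtain ⟨j, hj⟩ := sigmaStar_inr n hn1 i0 j0 r
      rw [hj]; simp [costT]
    have h1' : (∑ i : Fin n, costT n d NR K (Sum.inl i)
        (sigmaStar n hn1 i0 j0 (Sum.inl i))) = NR ^ 2 * d + K i0 j0 := by
      rw [Finset.sum_eq_single i0]
      · rw [sigmaStar_inl_self]; simp [costT]
      · intro i _ hne
        obtain ⟨r, hr⟩ := sigmaStar_inl_ne n hn1 i0 j0 i hne
        rw [hr]; simp [costT]
      · intro h; exact absurd (Finset.mem_univ i0) h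
    rw [h1', h2', add_zero]
  rw [hDeq]
  refine le_antisymm ?_ (le_ciInf hlow)
  have hbddP : BddBelow (Set.range fun σ : Equiv.Perm (Fin n ⊕ Fin (n - 1)) =>
      ∑ x, ∑ coord, (P n d c NR adjA a x coord - Q n d c NR adjB b (σ x) coord) ^ 2) :=
    (Set.finite_range _).bddBelow
  refine le_trans (ciInf_le hbddP (sigmaStar n hn1 i0 j0)) ?_
  rw [hcost (sigmaStar n hn1 i0 j0), hTsum]
  apply le_of_eq
  rw [hAdef]; ring


end EMDReduction
end
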